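/- arXiv:1911.02378 — 8 statements merged into one kernel-verified Lean document; each statement's English description precedes it below -/
import Mathlib

section
/- Let {X_i, Z_k} be an integral basis of a pseudo H-type Lie algebra with s > 0. If for some index i and some k, ℓ one has J_{Z_k}(X_i) = ± J_{Z_ℓ}(X_i), then k = ℓ. Consequently each basis vector X_i is mapped to ±X_j by at most one of the operators J_{Z_k}. -/
/-!
Suppose `J_k X = c • J_l X` with `k ≠ l`, and write `J_k² = -ε_k`, `J_l² = -ε_l`. Anticommutation
gives `J_k² X = -c² J_l² X`, so `ε_k = -c² ε_l`, while skewness gives `⟨J_k X, J_k X⟩ = ε_k ⟨X, X⟩`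
and likewise for `l`, so comparing lengths gives `ε_k = c² ε_l`. Hence `ε_k = 0`, which is
impossible for an orthonormal `Z_k`.
-/

open scoped BigOperators

/-- The signature-(r,s) scalar product on `ℝ^{r+s}`. -/
noncomputable def sig (r s : ℕ) (z z' : Fin (r + s) → ℝ) : ℝ :=
  ∑ i : Fin (r + s), (if (i : ℕ) < r then (1 : ℝ) else -1) * z i * z' i

section Clifford

variable {V W : Type*} [AddCommGroup V] [Module ℝ V] {q : W → W → ℝ} {J : W → V →ₗ[ℝ] V}

theorem apply_apply_self_of_clifford
    (hCl : ∀ z z', J z ∘ₗ J z' + J z' ∘ₗ J z = (-2 * q z z') • (LinearMap.id : V →ₗ[ℝ] V))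
    (z : W) (x : V) : J z (J z x) = -q z z • x := by
  have h := LinearMap.congr_fun (hCl z z) x
  simp only [LinearMap.add_apply, LinearMap.comp_apply, LinearMap.smul_apply,
    LinearMap.id_apply] at h
  linear_combination (norm := module) (1 / 2 : ℝ) • h

theorem apply_apply_anticomm_of_clifford
    (hCl : ∀ z z', J z ∘ₗ J z' + J z' ∘ₗ J z = (-2 * q z z') • (LinearMap.id : V →ₗ[ℝ] V))
    {z z' : W} (hzz' : q z z' = 0) (x : V) : J z (J z' x) = -J z' (J z x) := by
  have h := LinearMap.congr_fun (hCl z z') x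
  simp only [LinearMap.add_apply, LinearMap.comp_apply, LinearMap.smul_apply,
    LinearMap.id_apply, hzz'] at h
  linear_combination (norm := module) h

end Clifford

section SkewOperators

variable {V : Type*} [AddCommGroup V] [Module ℝ V] {B : LinearMap.BilinForm ℝ V}
  {A C : V →ₗ[ℝ] V} {a b : ℝ}

theorem bilin_apply_apply_self_of_skew (hskew : ∀ x y, B (A x) y + B x (A y) = 0)
    (hA : ∀ x, A (A x) = -a • x) (v : V) : B (A v) (A v) = a * B v v := by
  rw [eq_neg_of_add_eq_zero_left (hskew v (A v)), hA]
  simp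

theorem apply_ne_smul_apply_of_anticomm (hAskew : ∀ x y, B (A x) y + B x (A y) = 0)
    (hCskew : ∀ x y, B (C x) y + B x (C y) = 0) (hA : ∀ x, A (A x) = -a • x)
    (hC : ∀ x, C (C x) = -b • x) (hAC : ∀ x, A (C x) = -C (A x)) (ha : a ≠ 0)
    {v : V} (hv : B v v ≠ 0) (c : ℝ) : A v ≠ c • C v := by
  intro hAv
  have hv0 : v ≠ 0 := by rintro rfl; simp at hv
  have hsq : (a + c * c * b) • v = 0 := by
    have : A (A v) = (c * c * b) • v := by
      rw [hAv, map_smul, hAC, hAv, map_smul, hC]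
      module
    rw [hA] at this
    linear_combination (norm := module) -this
  have hlen : a * B v v = c * c * b * B v v := by
    rw [← bilin_apply_apply_self_of_skew hAskew hA, hAv]
    simp only [map_smul, LinearMap.smul_apply, smul_eq_mul,
      bilin_apply_apply_self_of_skew hCskew hC]
    ring
  have h1 : a + c * c * b = 0 := (smul_eq_zero.mp hsq).resolve_right hv0
  have h2 : a = c * c * b := mul_right_cancel₀ hv hlen
  exact ha (by linarith)

end SkewOperators

theorem statement3_general {r s N : ℕ} {V : Type*} [AddCommGroup V] [Module ℝ V]
    (B : LinearMap.BilinForm ℝ V)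
    (J : (Fin (r + s) → ℝ) →ₗ[ℝ] (V →ₗ[ℝ] V))
    (hCl : ∀ z z' : Fin (r + s) → ℝ,
      J z ∘ₗ J z' + J z' ∘ₗ J z = (-2 * sig r s z z') • (LinearMap.id : V →ₗ[ℝ] V))
    (hskew : ∀ (z : Fin (r + s) → ℝ) (X Y : V), B (J z X) Y + B X (J z Y) = 0)
    -- the orthonormal basis Z of ℝ^{r,s}
    (Z : Fin (r + s) → (Fin (r + s) → ℝ))
    (hZ : ∀ k l, sig r s (Z k) (Z l)
      = if k = l then (if (k : ℕ) < r then 1 else -1) else 0)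
    -- the orthonormal basis X of V, of signature (N, N)
    (X : Fin (2 * N) → V)
    (hX : ∀ i j, B (X i) (X j) = if i = j then (if (i : ℕ) < N then 1 else -1) else 0) :
    (∀ (i : Fin (2 * N)) (k l : Fin (r + s)),
      (J (Z k) (X i) = J (Z l) (X i) ∨ J (Z k) (X i) = - J (Z l) (X i)) → k = l) ∧
    (∀ (i j : Fin (2 * N)) (k l : Fin (r + s)),
      (J (Z k) (X i) = X j ∨ J (Z k) (X i) = - X j) →
      (J (Z l) (X i) = X j ∨ J (Z l) (X i) = - X j) → k = l) := by
  have hXX : ∀ i, B (X i) (X i) ≠ 0 := fun i ↦ by rw [hX, if_pos rfl]; split_ifs <;> norm_num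
  have hZZ : ∀ k, sig r s (Z k) (Z k) ≠ 0 := fun k ↦ by rw [hZ, if_pos rfl]; split_ifs <;> norm_num
  have hne : ∀ i k l (c : ℝ), J (Z k) (X i) = c • J (Z l) (X i) → k = l := by
    intro i k l c h
    by_contra hkl
    exact apply_ne_smul_apply_of_anticomm (hskew _) (hskew _)
      (apply_apply_self_of_clifford hCl _) (apply_apply_self_of_clifford hCl _)
      (apply_apply_anticomm_of_clifford hCl (by rw [hZ, if_neg hkl])) (hZZ k) (hXX i) c h
  have hpm : ∀ i k l, J (Z k) (X i) = J (Z l) (X i) ∨ J (Z k) (X i) = -J (Z l) (X i) → k = l := by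
    rintro i k l (h | h)
    · exact hne i k l 1 (by rw [h, one_smul])
    · exact hne i k l (-1) (by rw [h, neg_one_smul])
  refine ⟨hpm, fun i j k l hk hl ↦ hpm i k l ?_⟩
  rcases hk with hk | hk <;> rcases hl with hl | hl <;> simp [hk, hl]

/-- For an integral basis `{X_i, Z_k}` of a pseudo H-type Lie algebra with `s > 0`:
if `J_{Z_k}(X_i) = ± J_{Z_ℓ}(X_i)` for some `i`, then `k = ℓ`.  Consequently each basis
vector `X_i` is mapped to `±X_j` by at most one of the operators `J_{Z_k}`. -/
theorem statement3 {r s N : ℕ} (hs : 0 < s) {V : Type*} [AddCommGroup V] [Module ℝ V]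
    (B : LinearMap.BilinForm ℝ V)
    (hBsymm : ∀ X Y : V, B X Y = B Y X)
    (J : (Fin (r + s) → ℝ) →ₗ[ℝ] (V →ₗ[ℝ] V))
    (hCl : ∀ z z' : Fin (r + s) → ℝ,
      J z ∘ₗ J z' + J z' ∘ₗ J z = (-2 * sig r s z z') • (LinearMap.id : V →ₗ[ℝ] V))
    (hskew : ∀ (z : Fin (r + s) → ℝ) (X Y : V), B (J z X) Y + B X (J z Y) = 0)
    -- the orthonormal basis Z of ℝ^{r,s}
    (Z : Fin (r + s) → (Fin (r + s) → ℝ))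
    (hZ : ∀ k l, sig r s (Z k) (Z l)
      = if k = l then (if (k : ℕ) < r then 1 else -1) else 0)
    -- the orthonormal basis X of V, of signature (N, N)
    (X : Fin (2 * N) → V)
    (hX : ∀ i j, B (X i) (X j) = if i = j then (if (i : ℕ) < N then 1 else -1) else 0)
    -- the integrality property: each J_{Z_k} maps X_i to ±X_j with j ≠ i
    (hint : ∀ (k : Fin (r + s)) (i : Fin (2 * N)),
      ∃ j, j ≠ i ∧ (J (Z k) (X i) = X j ∨ J (Z k) (X i) = - X j)) :
    (∀ (i : Fin (2 * N)) (k l : Fin (r + s)),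
      (J (Z k) (X i) = J (Z l) (X i) ∨ J (Z k) (X i) = - J (Z l) (X i)) → k = l) ∧
    (∀ (i j : Fin (2 * N)) (k l : Fin (r + s)),
      (J (Z k) (X i) = X j ∨ J (Z k) (X i) = - X j) →
      (J (Z l) (X i) = X j ∨ J (Z l) (X i) = - X j) → k = l) :=
  statement3_general B J hCl hskew Z hZ X hX
end

section
/- For an integral basis {X_i, Z_k} of a pseudo H-type algebra, writing [X_i, X_j] = Σ_k c_{ij}^k Z_k, the structure constant c_{ij}^k is nonzero for at most one index k, and when nonzero it equals ±1. -/
/-!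
Since `J_{Z_k}` sends `X_i` to some `±X_m` and the `X`'s are orthonormal, `c_{ij}^k` is a sign
times `⟨±X_m, X_j⟩ ∈ {0, ±1}`, and it is nonzero only if `J_{Z_k} X_i = ±X_j`. For `k ≠ l` the
operators `J_{Z_k}`, `J_{Z_l}` are skew and anticommute, which makes `⟨J_{Z_k} x, J_{Z_l} x⟩`
antisymmetric in `k, l`; if both sent `X_i` to `±X_j` this would force `⟨X_j, X_j⟩ = 0`.
-/

open scoped BigOperators

theorem eq_zero_or_eq_one_or_eq_neg_one_of_mul {R : Type*} [Ring R] {ε c : R}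
    (hε : ε = 1 ∨ ε = -1) (h : ε * c = 0 ∨ ε * c = 1 ∨ ε * c = -1) :
    c = 0 ∨ c = 1 ∨ c = -1 := by
  rcases hε with rfl | rfl
  · simpa using h
  · simp only [neg_mul, one_mul, neg_eq_zero, neg_inj] at h
    rw [neg_eq_iff_eq_neg] at h
    tauto

namespace LinearMap.BilinForm

section SignedOrthonormal

variable {R M ι : Type*} [DecidableEq ι] [CommRing R] [AddCommGroup M] [Module R M]
  (B : LinearMap.BilinForm R M) {X : ι → M} {ε : ι → R}

theorem eq_or_eq_neg_of_apply_ne_zero (hX : ∀ i j, B (X i) (X j) = if i = j then ε i else 0)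
    {v : M} {m j : ι} (hv : v = X m ∨ v = -X m) (h : B v (X j) ≠ 0) :
    v = X j ∨ v = -X j := by
  obtain rfl : m = j := by
    by_contra hmj
    rcases hv with rfl | rfl <;> simp [hX, hmj] at h
  exact hv

theorem apply_eq_zero_or_eq_one_or_eq_neg_one
    (hX : ∀ i j, B (X i) (X j) = if i = j then ε i else 0) {v : M} {m : ι}
    (hε : ε m = 1 ∨ ε m = -1) (hv : v = X m ∨ v = -X m) (j : ι) :
    B v (X j) = 0 ∨ B v (X j) = 1 ∨ B v (X j) = -1 := by
  by_cases hmj : m = j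
  · subst hmj
    rcases hv with rfl | rfl <;> rcases hε with h | h <;> simp [hX, h]
  · rcases hv with rfl | rfl <;> simp [hX, hmj]

end SignedOrthonormal

theorem apply_apply_add_apply_apply_eq_zero_of_anticommute {R M : Type*} [CommRing R]
    [AddCommGroup M] [Module R M] (B : LinearMap.BilinForm R M) {S T : M →ₗ[R] M}
    (hS : ∀ x y, B (S x) y + B x (S y) = 0) (hT : ∀ x y, B (T x) y + B x (T y) = 0)
    {x : M} (hST : S (T x) + T (S x) = 0) :
    B (S x) (T x) + B (T x) (S x) = 0 := by
  have h := congrArg (B x) hST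
  rw [map_add, map_zero] at h
  linear_combination hS x (T x) + hT x (S x) - h

theorem apply_self_eq_zero_of_anticommute {K M : Type*} [Field K] [CharZero K]
    [AddCommGroup M] [Module K M] (B : LinearMap.BilinForm K M) {S T : M →ₗ[K] M}
    (hS : ∀ x y, B (S x) y + B x (S y) = 0) (hT : ∀ x y, B (T x) y + B x (T y) = 0)
    {x y : M} (hST : S (T x) + T (S x) = 0) (hSx : S x = y ∨ S x = -y)
    (hTx : T x = y ∨ T x = -y) :
    B y y = 0 := by
  have h := B.apply_apply_add_apply_apply_eq_zero_of_anticommute hS hT hST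
  rcases hSx with h1 | h1 <;> rcases hTx with h2 | h2 <;> rw [h1, h2] at h <;> simpa using h

end LinearMap.BilinForm

theorem statement4_general {r s N : ℕ} {V : Type*} [AddCommGroup V] [Module ℝ V]
    (B : LinearMap.BilinForm ℝ V)
    (J : (Fin (r + s) → ℝ) →ₗ[ℝ] (V →ₗ[ℝ] V))
    (hCl : ∀ z z' : Fin (r + s) → ℝ,
      J z ∘ₗ J z' + J z' ∘ₗ J z = (-2 * sig r s z z') • (LinearMap.id : V →ₗ[ℝ] V))
    (hskew : ∀ (z : Fin (r + s) → ℝ) (X Y : V), B (J z X) Y + B X (J z Y) = 0)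
    (Z : Fin (r + s) → (Fin (r + s) → ℝ))
    (hZ : ∀ k l, sig r s (Z k) (Z l)
      = if k = l then (if (k : ℕ) < r then 1 else -1) else 0)
    (X : Fin (2 * N) → V)
    (hX : ∀ i j, B (X i) (X j) = if i = j then (if (i : ℕ) < N then 1 else -1) else 0)
    (hint : ∀ (k : Fin (r + s)) (i : Fin (2 * N)),
      ∃ j, j ≠ i ∧ (J (Z k) (X i) = X j ∨ J (Z k) (X i) = - X j))
    -- the structure constants c_{ij}^k, determined by
    -- ⟨J_{Z_k} X_i, X_j⟩_V = ⟨Z_k, [X_i, X_j]⟩_{r,s} = ±c_{ij}^k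
    (c : Fin (2 * N) → Fin (2 * N) → Fin (r + s) → ℝ)
    (hc : ∀ i j k, B (J (Z k) (X i)) (X j)
      = (if (k : ℕ) < r then (1 : ℝ) else -1) * c i j k) :
    ∀ i j : Fin (2 * N),
      (∀ k, c i j k = 0 ∨ c i j k = 1 ∨ c i j k = -1) ∧
      (∀ k l, c i j k ≠ 0 → c i j l ≠ 0 → k = l) := by
  intro i j
  have hsign (p : Prop) [Decidable p] :
      (if p then (1 : ℝ) else -1) = 1 ∨ (if p then (1 : ℝ) else -1) = -1 := by
    split_ifs <;> simp
  have hJ (k) (hk : c i j k ≠ 0) : J (Z k) (X i) = X j ∨ J (Z k) (X i) = -X j := by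
    obtain ⟨m, -, hm⟩ := hint k i
    refine LinearMap.BilinForm.eq_or_eq_neg_of_apply_ne_zero B hX hm ?_
    rw [hc]
    exact mul_ne_zero (by rcases hsign ((k : ℕ) < r) with h | h <;> simp [h]) hk
  refine ⟨fun k => ?_, fun k l hk hl => ?_⟩
  · obtain ⟨m, -, hm⟩ := hint k i
    refine eq_zero_or_eq_one_or_eq_neg_one_of_mul (hsign ((k : ℕ) < r)) ?_
    rw [← hc]
    exact LinearMap.BilinForm.apply_eq_zero_or_eq_one_or_eq_neg_one B hX
      (hsign ((m : ℕ) < N)) hm j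
  · by_contra hkl
    have hanti : J (Z k) (J (Z l) (X i)) + J (Z l) (J (Z k) (X i)) = 0 := by
      simpa [hZ k l, hkl] using LinearMap.congr_fun (hCl (Z k) (Z l)) (X i)
    have hjj := LinearMap.BilinForm.apply_self_eq_zero_of_anticommute B
      (hskew _) (hskew _) hanti (hJ k hk) (hJ l hl)
    rw [hX, if_pos rfl] at hjj
    rcases hsign ((j : ℕ) < N) with h | h <;> simp [h] at hjj

/-- For an integral basis `{X_i, Z_k}` of a pseudo H-type algebra, writing
`[X_i, X_j] = Σ_k c_{ij}^k Z_k`, the structure constant `c_{ij}^k` is nonzero for at most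
one index `k`, and when nonzero it equals `±1`. -/
theorem statement4 {r s N : ℕ} (hs : 0 < s) {V : Type*} [AddCommGroup V] [Module ℝ V]
    (B : LinearMap.BilinForm ℝ V)
    (hBsymm : ∀ X Y : V, B X Y = B Y X)
    (J : (Fin (r + s) → ℝ) →ₗ[ℝ] (V →ₗ[ℝ] V))
    (hCl : ∀ z z' : Fin (r + s) → ℝ,
      J z ∘ₗ J z' + J z' ∘ₗ J z = (-2 * sig r s z z') • (LinearMap.id : V →ₗ[ℝ] V))
    (hskew : ∀ (z : Fin (r + s) → ℝ) (X Y : V), B (J z X) Y + B X (J z Y) = 0)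
    (Z : Fin (r + s) → (Fin (r + s) → ℝ))
    (hZ : ∀ k l, sig r s (Z k) (Z l)
      = if k = l then (if (k : ℕ) < r then 1 else -1) else 0)
    (X : Fin (2 * N) → V)
    (hX : ∀ i j, B (X i) (X j) = if i = j then (if (i : ℕ) < N then 1 else -1) else 0)
    (hint : ∀ (k : Fin (r + s)) (i : Fin (2 * N)),
      ∃ j, j ≠ i ∧ (J (Z k) (X i) = X j ∨ J (Z k) (X i) = - X j))
    -- the structure constants c_{ij}^k, determined by
    -- ⟨J_{Z_k} X_i, X_j⟩_V = ⟨Z_k, [X_i, X_j]⟩_{r,s} = ±c_{ij}^k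
    (c : Fin (2 * N) → Fin (2 * N) → Fin (r + s) → ℝ)
    (hc : ∀ i j k, B (J (Z k) (X i)) (X j)
      = (if (k : ℕ) < r then (1 : ℝ) else -1) * c i j k) :
    ∀ i j : Fin (2 * N),
      (∀ k, c i j k = 0 ∨ c i j k = 1 ∨ c i j k = -1) ∧
      (∀ k l, c i j k ≠ 0 → c i j l ≠ 0 → k = l) :=
  statement4_general B J hCl hskew Z hZ X hX hint c hc
end

section
/- For s > 0 and z = (μ,ν) ∈ ℝ^r × ℝ^s, the characteristic polynomial of Ω(z) satisfies det(Ω(z) + λ)² = [((λ² + ‖μ‖² + ‖ν‖²)² - 4‖μ‖²‖ν‖²)]^N = [(λ² + (‖μ‖+‖ν‖)²)(λ² + (‖μ‖-‖ν‖)²)]^N. -/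
/-!
Since `Ω` is skew, `det (Ω + λ)² = det ((Ω + λ)(Ω + λ)ᵀ) = det (λ² - Ω²)`. The H-type relations
make `λ² - Ω²` a block matrix `[[c, P], [Q, c]]` with scalar diagonal `c = λ² + ‖μ‖² + ‖ν‖²`
and `PQ = QP = 4‖μ‖²‖ν‖²`. Conjugating by `diag(1, -1)` flips the signs of `P` and `Q`, and the
product of the block matrix with its conjugate is the scalar `c² - PQ`; so `det (λ² - Ω²)` is a
square root of `(c² - 4‖μ‖²‖ν‖²)^(2N)`, and both are nonnegative, hence equal.
-/

open scoped Matrix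

namespace Matrix

variable {ι R : Type*} [CommRing R] {A B D : Matrix ι ι R}

theorem fromBlocks_hType_transpose (hA : Aᵀ = -A) (hD : Dᵀ = -D) :
    (fromBlocks (-A) B (-Bᵀ) D)ᵀ = -fromBlocks (-A) B (-Bᵀ) D := by
  rw [fromBlocks_transpose, fromBlocks_neg]
  simp [hA, hD]

variable [Fintype ι] [DecidableEq ι]

theorem det_add_smul_one_sq_of_transpose_eq_neg {Ω : Matrix ι ι R} (hΩ : Ωᵀ = -Ω) (t : R) :
    det (Ω + t • 1) ^ 2 = det (t ^ 2 • 1 - Ω * Ω) := by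
  have hmul : (Ω + t • 1) * (Ω + t • 1)ᵀ = t ^ 2 • 1 - Ω * Ω := by
    rw [transpose_add, hΩ, transpose_smul, transpose_one]
    simp only [mul_add, add_mul, mul_neg, Matrix.smul_mul, Matrix.mul_smul, smul_smul, one_mul,
      mul_one, sq]
    abel
  rw [sq, ← hmul, det_mul, det_transpose]

theorem det_fromBlocks_smul_one_sq (c : R) (P Q : Matrix ι ι R) :
    det (fromBlocks (c • 1) P Q (c • 1)) ^ 2
      = det (c ^ 2 • 1 - P * Q) * det (c ^ 2 • 1 - Q * P) := by
  set J : Matrix (ι ⊕ ι) (ι ⊕ ι) R := fromBlocks 1 0 0 (-1)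
  have hJ : det J * det J = 1 := by
    rw [← det_mul, fromBlocks_multiply]
    simp
  have hconj :
      J * fromBlocks (c • 1) P Q (c • 1) * J = fromBlocks (c • 1) (-P) (-Q) (c • 1) := by
    simp [J, fromBlocks_multiply]
  have hprod : fromBlocks (c • 1) P Q (c • 1) * fromBlocks (c • 1) (-P) (-Q) (c • 1)
      = fromBlocks (c ^ 2 • 1 - P * Q) 0 0 (c ^ 2 • 1 - Q * P) := by
    rw [fromBlocks_multiply]
    congr 1 <;> simp only [Matrix.smul_mul, Matrix.mul_smul, one_mul, mul_one, mul_neg, smul_smul,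
      sq, add_neg_cancel, neg_add_cancel] <;> abel
  set M := fromBlocks (c • 1) P Q (c • 1)
  calc det M ^ 2 = det M * (det J * det M * det J) := by linear_combination -det M ^ 2 * hJ
    _ = det (c ^ 2 • 1 - P * Q) * det (c ^ 2 • 1 - Q * P) := by
        rw [← det_mul, ← det_mul, hconj, ← det_mul, hprod, det_fromBlocks_zero₁₂]

variable {m n : R}

theorem fromBlocks_hType_mul_self (hA : Aᵀ = -A) (hD : Dᵀ = -D)
    (hA2 : A * A = (-m) • 1) (hD2 : D * D = (-m) • 1)
    (hB1 : B * Bᵀ = n • 1) (hB2 : Bᵀ * B = n • 1) (hAB : A * B + B * D = 0) :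
    fromBlocks (-A) B (-Bᵀ) D * fromBlocks (-A) B (-Bᵀ) D
      = fromBlocks ((-(m + n)) • 1) ((-2 : R) • (A * B))
          ((2 : R) • (Bᵀ * A)) ((-(m + n)) • 1) := by
  have hBD : B * D = -(A * B) := eq_neg_of_add_eq_zero_right hAB
  have hDB : D * Bᵀ = -(Bᵀ * A) := by
    have h := congrArg transpose hAB
    rw [transpose_add, transpose_mul, transpose_mul, hA, hD, transpose_zero, mul_neg, neg_mul,
      ← neg_add, neg_eq_zero] at h
    exact eq_neg_of_add_eq_zero_right h
  rw [fromBlocks_multiply]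
  congr 1
  · rw [neg_mul_neg, mul_neg, hA2, hB1]; module
  · rw [neg_mul, hBD]; module
  · rw [neg_mul_neg, mul_neg, hDB]; module
  · rw [neg_mul, hB2, hD2]; module

theorem det_fromBlocks_hType_add_smul_one_sq_sq (hA : Aᵀ = -A) (hD : Dᵀ = -D)
    (hA2 : A * A = (-m) • 1) (hD2 : D * D = (-m) • 1)
    (hB1 : B * Bᵀ = n • 1) (hB2 : Bᵀ * B = n • 1) (hAB : A * B + B * D = 0) (t : R) :
    (det (fromBlocks (-A) B (-Bᵀ) D + t • 1) ^ 2) ^ 2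
      = (((t ^ 2 + m + n) ^ 2 - 4 * m * n) ^ Fintype.card ι) ^ 2 := by
  set c := t ^ 2 + m + n
  have hsq : t ^ 2 • 1 - fromBlocks (-A) B (-Bᵀ) D * fromBlocks (-A) B (-Bᵀ) D
      = fromBlocks (c • 1) ((2 : R) • (A * B)) ((-2 : R) • (Bᵀ * A)) (c • 1) := by
    rw [fromBlocks_hType_mul_self hA hD hA2 hD2 hB1 hB2 hAB, ← fromBlocks_one,
      fromBlocks_smul, sub_eq_add_neg, fromBlocks_neg, fromBlocks_add]
    congr 1 <;> module
  have hPQ : (2 : R) • (A * B) * ((-2 : R) • (Bᵀ * A)) = (4 * m * n) • 1 := by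
    rw [Matrix.smul_mul, Matrix.mul_smul, mul_assoc, ← mul_assoc B, hB1, Matrix.smul_mul,
      Matrix.mul_smul, one_mul, hA2, smul_smul, smul_smul]
    module
  have hQP : (-2 : R) • (Bᵀ * A) * ((2 : R) • (A * B)) = (4 * m * n) • 1 := by
    rw [Matrix.smul_mul, Matrix.mul_smul, mul_assoc, ← mul_assoc A, hA2, Matrix.smul_mul,
      Matrix.mul_smul, Matrix.one_mul, hB2, smul_smul, smul_smul]
    module
  rw [det_add_smul_one_sq_of_transpose_eq_neg (fromBlocks_hType_transpose hA hD), hsq,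
    det_fromBlocks_smul_one_sq, hPQ, hQP, ← sub_smul, det_smul, det_one, mul_one]
  ring

end Matrix

theorem statement7_general {r s N : ℕ} (μ : Fin r → ℝ) (ν : Fin s → ℝ)
    (A B D : Matrix (Fin N) (Fin N) ℝ)
    (hA : Aᵀ = -A) (hD : Dᵀ = -D)
    (hA2 : A * A = (-(∑ i, μ i ^ 2)) • (1 : Matrix (Fin N) (Fin N) ℝ))
    (hD2 : D * D = (-(∑ i, μ i ^ 2)) • (1 : Matrix (Fin N) (Fin N) ℝ))
    (hB1 : B * Bᵀ = (∑ j, ν j ^ 2) • (1 : Matrix (Fin N) (Fin N) ℝ))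
    (hB2 : Bᵀ * B = (∑ j, ν j ^ 2) • (1 : Matrix (Fin N) (Fin N) ℝ))
    (hAB : A * B + B * D = 0) :
    ∀ lam : ℝ,
      (Matrix.fromBlocks (-A) B (-Bᵀ) D
          + lam • (1 : Matrix (Fin N ⊕ Fin N) (Fin N ⊕ Fin N) ℝ)).det ^ 2
        = (((lam ^ 2 + (∑ i, μ i ^ 2) + (∑ j, ν j ^ 2)) ^ 2
            - 4 * (∑ i, μ i ^ 2) * (∑ j, ν j ^ 2))) ^ N ∧
      (Matrix.fromBlocks (-A) B (-Bᵀ) D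
          + lam • (1 : Matrix (Fin N ⊕ Fin N) (Fin N ⊕ Fin N) ℝ)).det ^ 2
        = ((lam ^ 2 + (Real.sqrt (∑ i, μ i ^ 2) + Real.sqrt (∑ j, ν j ^ 2)) ^ 2)
            * (lam ^ 2 + (Real.sqrt (∑ i, μ i ^ 2) - Real.sqrt (∑ j, ν j ^ 2)) ^ 2)) ^ N := by
  intro lam
  set m := ∑ i, μ i ^ 2
  set n := ∑ j, ν j ^ 2
  have hm : 0 ≤ m := by positivity
  have hn : 0 ≤ n := by positivity
  have hbase : 0 ≤ (lam ^ 2 + m + n) ^ 2 - 4 * m * n := by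
    nlinarith [sq_nonneg (m - n), sq_nonneg (lam ^ 2),
      mul_nonneg (sq_nonneg lam) (add_nonneg hm hn)]
  have hdet : (Matrix.fromBlocks (-A) B (-Bᵀ) D + lam • 1).det ^ 2
      = ((lam ^ 2 + m + n) ^ 2 - 4 * m * n) ^ N := by
    rw [← sq_eq_sq₀ (by positivity) (pow_nonneg hbase N)]
    simpa only [Fintype.card_fin]
      using Matrix.det_fromBlocks_hType_add_smul_one_sq_sq hA hD hA2 hD2 hB1 hB2 hAB lam
  have hfactor (x y : ℝ) : (lam ^ 2 + x ^ 2 + y ^ 2) ^ 2 - 4 * x ^ 2 * y ^ 2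
      = (lam ^ 2 + (x + y) ^ 2) * (lam ^ 2 + (x - y) ^ 2) := by ring
  refine ⟨hdet, hdet.trans ?_⟩
  rw [← hfactor, Real.sq_sqrt hm, Real.sq_sqrt hn]

/-- For `s > 0` and `z = (μ,ν)`, the characteristic polynomial of the structure-constant
matrix `Ω(z) = [[-A(μ), B(ν)],[-B(ν)ᵀ, D(μ)]]` satisfies
`det(Ω(z) + λ)² = ((λ² + ‖μ‖² + ‖ν‖²)² - 4‖μ‖²‖ν‖²)^N
             = ((λ² + (‖μ‖+‖ν‖)²)(λ² + (‖μ‖-‖ν‖)²))^N`. -/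
theorem statement7 {r s N : ℕ} (hs : 0 < s) (μ : Fin r → ℝ) (ν : Fin s → ℝ)
    (A B D : Matrix (Fin N) (Fin N) ℝ)
    (hA : Aᵀ = -A) (hD : Dᵀ = -D)
    (hA2 : A * A = (-(∑ i, μ i ^ 2)) • (1 : Matrix (Fin N) (Fin N) ℝ))
    (hD2 : D * D = (-(∑ i, μ i ^ 2)) • (1 : Matrix (Fin N) (Fin N) ℝ))
    (hB1 : B * Bᵀ = (∑ j, ν j ^ 2) • (1 : Matrix (Fin N) (Fin N) ℝ))
    (hB2 : Bᵀ * B = (∑ j, ν j ^ 2) • (1 : Matrix (Fin N) (Fin N) ℝ))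
    (hBAB : Bᵀ * A * B + (∑ j, ν j ^ 2) • D = 0)
    (hAB : A * B + B * D = 0) :
    ∀ lam : ℝ,
      (Matrix.fromBlocks (-A) B (-Bᵀ) D
          + lam • (1 : Matrix (Fin N ⊕ Fin N) (Fin N ⊕ Fin N) ℝ)).det ^ 2
        = (((lam ^ 2 + (∑ i, μ i ^ 2) + (∑ j, ν j ^ 2)) ^ 2
            - 4 * (∑ i, μ i ^ 2) * (∑ j, ν j ^ 2))) ^ N ∧
      (Matrix.fromBlocks (-A) B (-Bᵀ) D
          + lam • (1 : Matrix (Fin N ⊕ Fin N) (Fin N ⊕ Fin N) ℝ)).det ^ 2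
        = ((lam ^ 2 + (Real.sqrt (∑ i, μ i ^ 2) + Real.sqrt (∑ j, ν j ^ 2)) ^ 2)
            * (lam ^ 2 + (Real.sqrt (∑ i, μ i ^ 2) - Real.sqrt (∑ j, ν j ^ 2)) ^ 2)) ^ N :=
  statement7_general μ ν A B D hA hD hA2 hD2 hB1 hB2 hAB
end

section
/- For s > 0 and z ≠ 0, the eigenvalues of the Hermitian matrix Ω(√-1 z) = i·Ω(z) (equivalently, i times the skew-symmetric real matrix Ω(z)) are exactly ±(‖μ‖ + ‖ν‖) and ±(‖μ‖ - ‖ν‖). -/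
/-!
Write `a = ‖μ‖²`, `b = ‖ν‖²` and `Ω = Ω(z)`. The block relations give `Ω² + (a + b) = 2K` with
`K = [[0, BD], [-DBᵀ, 0]]` and `K² = ab`, so `iΩ` is annihilated by `(x² - (a + b))² - 4ab`,
whose roots are `±√a ± √b`. Conversely, `A` is skew with `A² = -a`, so both `±i√a` are
eigenvalues of `A`; for `Ax = iτx` the vectors `(√b x, ±i Bᵀx)` (or `(x, 0)` when `Bᵀx = 0`)
are eigenvectors of `iΩ` with eigenvalues `τ ∓ √b`.
-/

open scoped Matrix
open Matrix Polynomial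

variable {n R S K : Type*}

lemma spectrum.eval_eq_zero_of_aeval_eq_zero {A : Type*} [Field K] [Ring A] [Algebra K A]
    {a : A} {p : K[X]} (hp : aeval a p = 0) {k : K} (hk : k ∈ spectrum K a) : p.eval k = 0 := by
  have hmem := subset_polynomial_aeval a p ⟨k, hk, rfl⟩
  rw [hp, mem_iff, sub_zero] at hmem
  by_contra hne
  exact hmem ((Ne.isUnit hne).map (algebraMap K A))

namespace Matrix

variable [Fintype n] [DecidableEq n]

lemma spectrum_transpose [CommRing R] (A : Matrix n n R) : spectrum R Aᵀ = spectrum R A := by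
  ext r
  simp only [mem_spectrum_iff_not_isUnit_eval_charpoly, charpoly_transpose]

lemma neg_mem_spectrum_of_transpose_eq_neg [CommRing R] {A : Matrix n n R} (hA : Aᵀ = -A)
    {r : R} (hr : r ∈ spectrum R A) : -r ∈ spectrum R A := by
  rwa [← spectrum_transpose, hA, ← spectrum.neg_eq, Set.neg_mem_neg]

lemma mem_spectrum_iff_exists_mulVec_eq_smul [Field K] {A : Matrix n n K} {r : K} :
    r ∈ spectrum K A ↔ ∃ v ≠ 0, A *ᵥ v = r • v := by
  rw [spectrum.mem_iff, isUnit_iff_isUnit_det, isUnit_iff_ne_zero, not_not,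
    ← exists_mulVec_eq_zero_iff, Algebra.algebraMap_eq_smul_one]
  simp only [sub_mulVec, smul_mulVec, one_mulVec, sub_eq_zero, eq_comm]

lemma mem_spectrum_of_mul_self_eq_sq_smul_one [Field K] [IsAlgClosed K] [Nonempty n]
    {A : Matrix n n K} (hA : Aᵀ = -A) {t : K} (h : A * A = t ^ 2 • 1) : t ∈ spectrum K A := by
  obtain ⟨r, hr⟩ := spectrum.nonempty_of_isAlgClosed_of_finiteDimensional K A
  have hroot : r ^ 2 - t ^ 2 = 0 := by
    have hp : aeval A (X ^ 2 - C (t ^ 2)) = 0 := by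
      rw [map_sub, aeval_X_pow, aeval_C, Algebra.algebraMap_eq_smul_one, sq, h, sub_self]
    simpa using spectrum.eval_eq_zero_of_aeval_eq_zero hp hr
  rcases sq_eq_sq_iff_eq_or_eq_neg.mp (sub_eq_zero.mp hroot) with rfl | rfl
  · exact hr
  · simpa using neg_mem_spectrum_of_transpose_eq_neg hA hr

end Matrix

lemma eq_add_or_eq_sub_of_biquadratic [Field K] {x α β : K}
    (h : (x ^ 2 - (α ^ 2 + β ^ 2)) ^ 2 = 4 * α ^ 2 * β ^ 2) :
    x = α + β ∨ x = -(α + β) ∨ x = α - β ∨ x = -(α - β) := by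
  have hfactor : (x - (α + β)) * (x + (α + β)) * ((x - (α - β)) * (x + (α - β))) = 0 := by
    linear_combination h
  simp only [mul_eq_zero, sub_eq_zero, add_eq_zero_iff_eq_neg] at hfactor
  tauto

section CommRing

variable [CommRing R]

-- The structure-constant matrix `Ω(z)` of the paper.
def hTypeMatrix (A B D : Matrix n n R) : Matrix (n ⊕ n) (n ⊕ n) R :=
  fromBlocks (-A) B (-Bᵀ) D

lemma hTypeMatrix_map [CommRing S] (A B D : Matrix n n R) (f : R →+* S) :
    (hTypeMatrix A B D).map f = hTypeMatrix (A.map f) (B.map f) (D.map f) := by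
  simp only [hTypeMatrix, fromBlocks_map, transpose_map, Matrix.map_neg _ f.map_neg]

variable [Fintype n] [DecidableEq n]

-- The relations between the blocks of `Ω(z)`, with `a = ‖μ‖²` and `b = ‖ν‖²`.
structure IsHTypeTriple (A B D : Matrix n n R) (a b : R) : Prop where
  transpose_A : Aᵀ = -A
  transpose_D : Dᵀ = -D
  mul_self_A : A * A = -a • 1
  mul_self_D : D * D = -a • 1
  mul_transpose_B : B * Bᵀ = b • 1
  transpose_mul_B : Bᵀ * B = b • 1
  anticomm : A * B + B * D = 0

namespace IsHTypeTriple

variable {A B D : Matrix n n R} {a b : R}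

lemma map [CommRing S] (h : IsHTypeTriple A B D a b) (f : R →+* S) :
    IsHTypeTriple (A.map f) (B.map f) (D.map f) (f a) (f b) := by
  have hmul (P Q : Matrix n n R) : P.map f * Q.map f = (P * Q).map f :=
    (Matrix.map_mul ..).symm
  have hsmul (c : R) : (c • (1 : Matrix n n R)).map f = f c • 1 := by
    rw [Matrix.map_smul' _ _ _ (map_mul f), Matrix.map_one _ f.map_zero f.map_one]
  refine ⟨?_, ?_, ?_, ?_, ?_, ?_, ?_⟩
  · rw [← transpose_map, h.transpose_A, Matrix.map_neg _ f.map_neg]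
  · rw [← transpose_map, h.transpose_D, Matrix.map_neg _ f.map_neg]
  · rw [hmul, h.mul_self_A, hsmul, map_neg]
  · rw [hmul, h.mul_self_D, hsmul, map_neg]
  · rw [← transpose_map, hmul, h.mul_transpose_B, hsmul]
  · rw [← transpose_map, hmul, h.transpose_mul_B, hsmul]
  · rw [hmul, hmul, ← Matrix.map_add _ f.map_add, h.anticomm, Matrix.map_zero _ f.map_zero]

lemma transpose_B_mul_A (h : IsHTypeTriple A B D a b) : Bᵀ * A = -(D * Bᵀ) := by
  have := congrArg transpose h.anticomm
  rw [transpose_add, transpose_mul, transpose_mul, h.transpose_A, h.transpose_D,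
    transpose_zero, mul_neg, neg_mul, ← neg_add, neg_eq_zero] at this
  exact eq_neg_of_add_eq_zero_left this

lemma hTypeMatrix_mul_self_add (h : IsHTypeTriple A B D a b) :
    hTypeMatrix A B D * hTypeMatrix A B D + (a + b) • 1
      = (2 : R) • fromBlocks 0 (B * D) (-(D * Bᵀ)) 0 := by
  have hBD : -(A * B) = B * D := neg_eq_of_add_eq_zero_right h.anticomm
  rw [hTypeMatrix, fromBlocks_multiply, ← fromBlocks_one, fromBlocks_smul, fromBlocks_add,
    fromBlocks_smul, fromBlocks_inj]
  simp only [neg_mul, mul_neg, neg_neg, h.mul_self_A, h.mul_self_D, h.mul_transpose_B,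
    h.transpose_mul_B, hBD, h.transpose_B_mul_A, smul_zero]
  refine ⟨?_, ?_, ?_, ?_⟩ <;> module

lemma offDiag_mul_self (h : IsHTypeTriple A B D a b) :
    fromBlocks 0 (B * D) (-(D * Bᵀ)) 0 * fromBlocks 0 (B * D) (-(D * Bᵀ)) 0
      = (a * b) • (1 : Matrix (n ⊕ n) (n ⊕ n) R) := by
  have hBDDB : B * D * (D * Bᵀ) = -(a * b) • 1 := by
    rw [Matrix.mul_assoc, ← Matrix.mul_assoc D, h.mul_self_D, Matrix.smul_mul, Matrix.one_mul,
      Matrix.mul_smul, h.mul_transpose_B, smul_smul, neg_mul]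
  have hDBBD : D * Bᵀ * (B * D) = -(a * b) • 1 := by
    rw [Matrix.mul_assoc, ← Matrix.mul_assoc Bᵀ, h.transpose_mul_B, Matrix.smul_mul,
      Matrix.one_mul, Matrix.mul_smul, h.mul_self_D, smul_smul, mul_neg, mul_comm]
  rw [fromBlocks_multiply, ← fromBlocks_one, fromBlocks_smul]
  simp [hBDDB, hDBBD]

lemma sq_hTypeMatrix_mul_self_add (h : IsHTypeTriple A B D a b) :
    (hTypeMatrix A B D * hTypeMatrix A B D + (a + b) • 1) ^ 2
      = (4 * a * b) • (1 : Matrix (n ⊕ n) (n ⊕ n) R) := by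
  rw [sq, h.hTypeMatrix_mul_self_add, smul_mul_smul, h.offDiag_mul_self, smul_smul]
  ring_nf

end IsHTypeTriple

end CommRing

section Complex

open Complex

variable [Fintype n] [DecidableEq n]
variable {A B D : Matrix n n ℂ} {a b : ℂ}

namespace IsHTypeTriple

lemma biquadratic_of_mem_spectrum (h : IsHTypeTriple A B D a b) {x : ℂ}
    (hx : x ∈ spectrum ℂ (I • hTypeMatrix A B D)) : (x ^ 2 - (a + b)) ^ 2 = 4 * a * b := by
  set Ω := hTypeMatrix A B D
  have hsq : (I • Ω) ^ 2 = -(Ω * Ω) := by rw [_root_.smul_pow, I_sq, neg_one_smul, sq]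
  have hp : aeval (I • Ω) ((X ^ 2 - C (a + b)) ^ 2 - C (4 * a * b)) = 0 := by
    rw [map_sub, map_pow, map_sub, aeval_X_pow, aeval_C, aeval_C,
      Algebra.algebraMap_eq_smul_one, Algebra.algebraMap_eq_smul_one, hsq, ← neg_add', neg_sq,
      h.sq_hTypeMatrix_mul_self_add, sub_self]
  simpa [sub_eq_zero] using spectrum.eval_eq_zero_of_aeval_eq_zero hp hx

lemma sub_mul_mem_spectrum {β : ℂ} (h : IsHTypeTriple A B D a (β ^ 2)) {x : n → ℂ}
    (hx : x ≠ 0) {τ : ℂ} (hAx : A *ᵥ x = (τ * I) • x) {σ : ℂ} (hσ : σ ^ 2 = 1) :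
    τ - σ * β ∈ spectrum ℂ (I • hTypeMatrix A B D) := by
  have hBBx : B *ᵥ (Bᵀ *ᵥ x) = β ^ 2 • x := by
    rw [mulVec_mulVec, h.mul_transpose_B, smul_mulVec, one_mulVec]
  have hDBx : D *ᵥ (Bᵀ *ᵥ x) = (-(τ * I)) • (Bᵀ *ᵥ x) := by
    rw [mulVec_mulVec, ← neg_neg (D * Bᵀ), ← h.transpose_B_mul_A, neg_mulVec, ← mulVec_mulVec,
      hAx, mulVec_smul, neg_smul]
  rw [mem_spectrum_iff_exists_mulVec_eq_smul]
  by_cases hBx : Bᵀ *ᵥ x = 0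
  · have hβ : β = 0 := by
      rw [hBx, mulVec_zero, eq_comm, smul_eq_zero] at hBBx
      exact pow_eq_zero_iff two_ne_zero |>.mp (hBBx.resolve_right hx)
    refine ⟨Sum.elim x 0, fun h0 => hx (funext fun i => congrFun h0 (Sum.inl i)), ?_⟩
    rw [smul_mulVec, hTypeMatrix, fromBlocks_mulVec]
    simp only [Sum.elim_comp_inl, Sum.elim_comp_inr, neg_mulVec, hAx, hBx, mulVec_zero, add_zero,
      neg_zero]
    ext (i | i)
    · simp only [Pi.smul_apply, Sum.elim_inl, Pi.neg_apply, smul_eq_mul]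
      linear_combination (-τ * x i) * I_sq + σ * x i * hβ
    · simp
  · refine ⟨Sum.elim (β • x) ((σ * I) • (Bᵀ *ᵥ x)), ?_, ?_⟩
    · have hσI : σ * I ≠ 0 := mul_ne_zero (by rintro rfl; norm_num at hσ) I_ne_zero
      intro h0
      exact hBx (funext fun i => by simpa [hσI] using congrFun h0 (Sum.inr i))
    · rw [smul_mulVec, hTypeMatrix, fromBlocks_mulVec]
      simp only [Sum.elim_comp_inl, Sum.elim_comp_inr, neg_mulVec, mulVec_smul, hAx, hBBx, hDBx]
      ext (i | i) <;>
        simp only [Pi.smul_apply, Sum.elim_inl, Sum.elim_inr, Pi.add_apply, Pi.neg_apply,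
          smul_eq_mul]
      · linear_combination (β ^ 2 * σ - β * τ) * x i * I_sq
      · linear_combination I * (Bᵀ *ᵥ x) i * (β * hσ - σ * τ * I_sq)

lemma spectrum_I_smul_hTypeMatrix [Nonempty n] {α β : ℂ}
    (h : IsHTypeTriple A B D (α ^ 2) (β ^ 2)) :
    spectrum ℂ (I • hTypeMatrix A B D) = {α + β, -(α + β), α - β, -(α - β)} := by
  refine Set.Subset.antisymm (fun x hx => eq_add_or_eq_sub_of_biquadratic
    (h.biquadratic_of_mem_spectrum hx)) ?_
  have hmem (τ σ : ℂ) (hτ : τ ^ 2 = α ^ 2) (hσ : σ ^ 2 = 1) :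
      τ - σ * β ∈ spectrum ℂ (I • hTypeMatrix A B D) := by
    have hAτ : A * A = (τ * I) ^ 2 • 1 := by rw [h.mul_self_A, mul_pow, I_sq, hτ, mul_neg_one]
    obtain ⟨x, hx, hAx⟩ := mem_spectrum_iff_exists_mulVec_eq_smul.mp
      (mem_spectrum_of_mul_self_eq_sq_smul_one h.transpose_A hAτ)
    exact h.sub_mul_mem_spectrum hx hAx hσ
  rintro x (rfl | rfl | rfl | rfl)
  · convert hmem α (-1) rfl (by norm_num) using 1; ring
  · convert hmem (-α) 1 (neg_sq α) (by norm_num) using 1; ring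
  · convert hmem α 1 rfl (by norm_num) using 1; ring
  · convert hmem (-α) (-1) (neg_sq α) (by norm_num) using 1; ring

end IsHTypeTriple

end Complex

theorem statement8_general {r s N : ℕ} (hN : 0 < N)
    (μ : Fin r → ℝ) (ν : Fin s → ℝ)
    (A B D : Matrix (Fin N) (Fin N) ℝ)
    (hA : Aᵀ = -A) (hD : Dᵀ = -D)
    (hA2 : A * A = (-(∑ i, μ i ^ 2)) • (1 : Matrix (Fin N) (Fin N) ℝ))
    (hD2 : D * D = (-(∑ i, μ i ^ 2)) • (1 : Matrix (Fin N) (Fin N) ℝ))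
    (hB1 : B * Bᵀ = (∑ j, ν j ^ 2) • (1 : Matrix (Fin N) (Fin N) ℝ))
    (hB2 : Bᵀ * B = (∑ j, ν j ^ 2) • (1 : Matrix (Fin N) (Fin N) ℝ))
    (hAB : A * B + B * D = 0) :
    spectrum ℂ (Complex.I •
        (Matrix.fromBlocks (-A) B (-Bᵀ) D).map (Complex.ofReal))
      = {((Real.sqrt (∑ i, μ i ^ 2) + Real.sqrt (∑ j, ν j ^ 2) : ℝ) : ℂ),
         (-(Real.sqrt (∑ i, μ i ^ 2) + Real.sqrt (∑ j, ν j ^ 2) : ℝ) : ℂ),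
         ((Real.sqrt (∑ i, μ i ^ 2) - Real.sqrt (∑ j, ν j ^ 2) : ℝ) : ℂ),
         (-(Real.sqrt (∑ i, μ i ^ 2) - Real.sqrt (∑ j, ν j ^ 2) : ℝ) : ℂ)} := by
  have : Nonempty (Fin N) := ⟨⟨0, hN⟩⟩
  have hμ : ∑ i, μ i ^ 2 = √(∑ i, μ i ^ 2) ^ 2 := (Real.sq_sqrt (by positivity)).symm
  have hν : ∑ j, ν j ^ 2 = √(∑ j, ν j ^ 2) ^ 2 := (Real.sq_sqrt (by positivity)).symm
  have h : IsHTypeTriple A B D (√(∑ i, μ i ^ 2) ^ 2) (√(∑ j, ν j ^ 2) ^ 2) := by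
    rw [← hμ, ← hν]
    exact ⟨hA, hD, hA2, hD2, hB1, hB2, hAB⟩
  have hC := h.map Complex.ofRealHom
  rw [map_pow, map_pow] at hC
  have hspec := hC.spectrum_I_smul_hTypeMatrix
  rw [← hTypeMatrix_map] at hspec
  push_cast
  exact hspec

/-- For `s > 0` and `z = (μ,ν) ≠ 0`, the eigenvalues of the Hermitian matrix
`i·Ω(z)` (with `Ω(z) = [[-A(μ), B(ν)],[-B(ν)ᵀ, D(μ)]]` real skew-symmetric)
are exactly `±(‖μ‖ + ‖ν‖)` and `±(‖μ‖ - ‖ν‖)`. -/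
theorem statement8 {r s N : ℕ} (hs : 0 < s) (hN : 0 < N)
    (μ : Fin r → ℝ) (ν : Fin s → ℝ) (hz : ¬(μ = 0 ∧ ν = 0))
    (A B D : Matrix (Fin N) (Fin N) ℝ)
    (hA : Aᵀ = -A) (hD : Dᵀ = -D)
    (hA2 : A * A = (-(∑ i, μ i ^ 2)) • (1 : Matrix (Fin N) (Fin N) ℝ))
    (hD2 : D * D = (-(∑ i, μ i ^ 2)) • (1 : Matrix (Fin N) (Fin N) ℝ))
    (hB1 : B * Bᵀ = (∑ j, ν j ^ 2) • (1 : Matrix (Fin N) (Fin N) ℝ))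
    (hB2 : Bᵀ * B = (∑ j, ν j ^ 2) • (1 : Matrix (Fin N) (Fin N) ℝ))
    (hBAB : Bᵀ * A * B + (∑ j, ν j ^ 2) • D = 0)
    (hAB : A * B + B * D = 0) :
    spectrum ℂ (Complex.I •
        (Matrix.fromBlocks (-A) B (-Bᵀ) D).map (Complex.ofReal))
      = {((Real.sqrt (∑ i, μ i ^ 2) + Real.sqrt (∑ j, ν j ^ 2) : ℝ) : ℂ),
         (-(Real.sqrt (∑ i, μ i ^ 2) + Real.sqrt (∑ j, ν j ^ 2) : ℝ) : ℂ),
         ((Real.sqrt (∑ i, μ i ^ 2) - Real.sqrt (∑ j, ν j ^ 2) : ℝ) : ℂ),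
         (-(Real.sqrt (∑ i, μ i ^ 2) - Real.sqrt (∑ j, ν j ^ 2) : ℝ) : ℂ)} :=
  statement8_general hN μ ν A B D hA hD hA2 hD2 hB1 hB2 hAB
end

section
/- Suppose z = (μ,ν) ≠ 0 with ‖μ‖ = ‖ν‖. Then the kernel of Ω(z) equals { (B(ν)x, -D(μ)x) : x ∈ ℝ^N } and has dimension N. -/
open scoped BigOperators Matrix

/-- For `z = (μ,ν) ≠ 0` with `‖μ‖ = ‖ν‖`, the kernel of
`Ω(z) = [[-A(μ), B(ν)],[-B(ν)ᵀ, D(μ)]]` equals `{(B(ν)x, -D(μ)x) : x ∈ ℝ^N}` and has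
dimension `N`. -/
theorem statement9 {r s N : ℕ} (hs : 0 < s)
    (μ : Fin r → ℝ) (ν : Fin s → ℝ) (hz : ¬(μ = 0 ∧ ν = 0))
    (hab : (∑ i, μ i ^ 2) = (∑ j, ν j ^ 2))
    (A B D : Matrix (Fin N) (Fin N) ℝ)
    (hA : Aᵀ = -A) (hD : Dᵀ = -D)
    (hA2 : A * A = (-(∑ i, μ i ^ 2)) • (1 : Matrix (Fin N) (Fin N) ℝ))
    (hD2 : D * D = (-(∑ i, μ i ^ 2)) • (1 : Matrix (Fin N) (Fin N) ℝ))
    (hB1 : B * Bᵀ = (∑ j, ν j ^ 2) • (1 : Matrix (Fin N) (Fin N) ℝ))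
    (hB2 : Bᵀ * B = (∑ j, ν j ^ 2) • (1 : Matrix (Fin N) (Fin N) ℝ))
    (hAB : A * B + B * D = 0)
    (hBA : Bᵀ * A + D * Bᵀ = 0) :
    {v : Fin N ⊕ Fin N → ℝ | (Matrix.fromBlocks (-A) B (-Bᵀ) D).mulVec v = 0}
      = {v : Fin N ⊕ Fin N → ℝ | ∃ x : Fin N → ℝ,
          v = Sum.elim (B.mulVec x) (fun i => -(D.mulVec x i))} ∧
    Module.finrank ℝ
      ↥(LinearMap.ker (Matrix.fromBlocks (-A) B (-Bᵀ) D).mulVecLin) = N := by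
  classical
  set c : ℝ := ∑ j, ν j ^ 2 with hc
  have hcpos : 0 < c := by
    rcases not_and_or.mp hz with h | h
    · rw [← hab]
      obtain ⟨i, hi⟩ : ∃ i, μ i ≠ 0 := by
        by_contra hcon; push_neg at hcon; exact h (funext hcon)
      have h0 : 0 < μ i ^ 2 := by positivity
      exact lt_of_lt_of_le h0
        (Finset.single_le_sum (fun j _ => sq_nonneg (μ j)) (Finset.mem_univ i))
    · obtain ⟨j, hj⟩ : ∃ j, ν j ≠ 0 := by
        by_contra hcon; push_neg at hcon; exact h (funext hcon)
      have h0 : 0 < ν j ^ 2 := by positivity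
      exact lt_of_lt_of_le h0
        (Finset.single_le_sum (fun k _ => sq_nonneg (ν k)) (Finset.mem_univ j))
  have hcne : c ≠ 0 := ne_of_gt hcpos
  rw [hab] at hD2
  -- vector-level identities
  have hBBt : ∀ u : Fin N → ℝ, B *ᵥ (Bᵀ *ᵥ u) = c • u := by
    intro u
    rw [Matrix.mulVec_mulVec, hB1, Matrix.smul_mulVec, Matrix.one_mulVec]
  have hBtB : ∀ u : Fin N → ℝ, Bᵀ *ᵥ (B *ᵥ u) = c • u := by
    intro u
    rw [Matrix.mulVec_mulVec, hB2, Matrix.smul_mulVec, Matrix.one_mulVec]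
  have hDDv : ∀ u : Fin N → ℝ, D *ᵥ (D *ᵥ u) = -(c • u) := by
    intro u
    rw [Matrix.mulVec_mulVec, hD2, Matrix.smul_mulVec, Matrix.one_mulVec, neg_smul]
  have hDBt : D * Bᵀ = -(Bᵀ * A) := by
    have := hBA
    linear_combination (norm := noncomm_ring) hBA
  -- main set equality
  have hset : {v : Fin N ⊕ Fin N → ℝ | (Matrix.fromBlocks (-A) B (-Bᵀ) D).mulVec v = 0}
      = {v : Fin N ⊕ Fin N → ℝ | ∃ x : Fin N → ℝ,
          v = Sum.elim (B.mulVec x) (fun i => -(D.mulVec x i))} := by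
    ext v
    simp only [Set.mem_setOf_eq]
    constructor
    · intro hv
      set u : Fin N → ℝ := v ∘ Sum.inl with hu
      set w : Fin N → ℝ := v ∘ Sum.inr with hw
      have hveq : v = Sum.elim u w := by
        funext i; cases i <;> rfl
      rw [hveq, Matrix.fromBlocks_mulVec] at hv
      simp only [Sum.elim_comp_inl, Sum.elim_comp_inr] at hv
      have h1 : (-A) *ᵥ u + B *ᵥ w = 0 := funext fun i => congrFun hv (Sum.inl i)
      have h2 : (-Bᵀ) *ᵥ u + D *ᵥ w = 0 := funext fun i => congrFun hv (Sum.inr i)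
      rw [Matrix.neg_mulVec, neg_add_eq_zero] at h1 h2
      refine ⟨c⁻¹ • (Bᵀ *ᵥ u), ?_⟩
      have e1 : B *ᵥ (c⁻¹ • (Bᵀ *ᵥ u)) = u := by
        rw [Matrix.mulVec_smul, hBBt, smul_smul, inv_mul_cancel₀ hcne, one_smul]
      have e2 : D *ᵥ (c⁻¹ • (Bᵀ *ᵥ u)) = -w := by
        rw [Matrix.mulVec_smul, Matrix.mulVec_mulVec, hDBt, Matrix.neg_mulVec,
          ← Matrix.mulVec_mulVec, h1, hBtB, smul_neg, smul_smul,
          inv_mul_cancel₀ hcne, one_smul]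
      rw [hveq]
      funext i
      cases i with
      | inl i => simp [e1]
      | inr i => simp [e2, congrFun e2 i]
    · rintro ⟨x, rfl⟩
      have hneg : (fun i => -(D.mulVec x i)) = -(D *ᵥ x) := rfl
      rw [hneg, Matrix.fromBlocks_mulVec]
      simp only [Sum.elim_comp_inl, Sum.elim_comp_inr]
      have r1 : (-A) *ᵥ (B *ᵥ x) + B *ᵥ (-(D *ᵥ x)) = 0 := by
        rw [Matrix.neg_mulVec, Matrix.mulVec_neg, Matrix.mulVec_mulVec, Matrix.mulVec_mulVec,
          ← neg_add, ← Matrix.add_mulVec, hAB, Matrix.zero_mulVec, neg_zero]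
      have r2 : (-Bᵀ) *ᵥ (B *ᵥ x) + D *ᵥ (-(D *ᵥ x)) = 0 := by
        rw [Matrix.neg_mulVec, Matrix.mulVec_neg, hBtB, hDDv, neg_neg, neg_add_cancel]
      rw [r1, r2]
      funext i; cases i <;> rfl
  constructor
  · exact hset
  · -- dimension part
    set M : Matrix (Fin N ⊕ Fin N) (Fin N) ℝ := Matrix.fromRows B (-D) with hM
    have hMv : ∀ x : Fin N → ℝ,
        M *ᵥ x = Sum.elim (B.mulVec x) (fun i => -(D.mulVec x i)) := by
      intro x
      rw [hM, Matrix.fromRows_mulVec, Matrix.neg_mulVec]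
      rfl
    have hker : LinearMap.ker (Matrix.fromBlocks (-A) B (-Bᵀ) D).mulVecLin
        = LinearMap.range M.mulVecLin := by
      ext v
      simp only [LinearMap.mem_ker, Matrix.mulVecLin_apply, LinearMap.mem_range]
      constructor
      · intro h
        have : v ∈ {v : Fin N ⊕ Fin N → ℝ |
            (Matrix.fromBlocks (-A) B (-Bᵀ) D).mulVec v = 0} := h
        rw [hset] at this
        obtain ⟨x, hx⟩ := this
        exact ⟨x, by rw [hMv x, ← hx]⟩
      · rintro ⟨x, rfl⟩
        have : M *ᵥ x ∈ {v : Fin N ⊕ Fin N → ℝ | ∃ x : Fin N → ℝ,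
            v = Sum.elim (B.mulVec x) (fun i => -(D.mulVec x i))} := ⟨x, hMv x⟩
        rw [← hset] at this
        exact this
    have hinj : Function.Injective M.mulVecLin := by
      rw [← LinearMap.ker_eq_bot]
      rw [LinearMap.ker_eq_bot']
      intro x hx
      have hx' : Sum.elim (B *ᵥ x) (fun i => -((D *ᵥ x) i)) = 0 := by
        rw [← hMv x, ← Matrix.mulVecLin_apply]; exact hx
      have hBx : B *ᵥ x = 0 := funext fun i => congrFun hx' (Sum.inl i)
      have : c • x = 0 := by rw [← hBtB x, hBx, Matrix.mulVec_zero]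
      have := smul_eq_zero.mp this
      tauto
    rw [hker, LinearMap.finrank_range_of_inj hinj]
    exact Module.finrank_fin_fun ℝ
end

section
/- Let z = (μ,ν) with both μ ≠ 0 and ν ≠ 0 and ‖μ‖ ≠ ‖ν‖. Then each of the four eigenvalues ±(‖μ‖ ± ‖ν‖) of i·Ω(z) has eigenspace of dimension N/2; in particular N is even. -/
open scoped BigOperators Matrix

open Matrix Module Complex

/-- finrank of kernel of mulVecLin of transpose equals that of the matrix. -/
lemma kerT {N : ℕ} (X : Matrix (Fin N) (Fin N) ℂ) :
    Module.finrank ℂ (LinearMap.ker Xᵀ.mulVecLin) =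
      Module.finrank ℂ (LinearMap.ker X.mulVecLin) := by
  have h1 := LinearMap.finrank_range_add_finrank_ker X.mulVecLin
  have h2 := LinearMap.finrank_range_add_finrank_ker Xᵀ.mulVecLin
  have hr : Xᵀ.rank = X.rank := Matrix.rank_transpose X
  unfold Matrix.rank at hr
  rw [Module.finrank_pi] at h1 h2
  simp only [Fintype.card_fin] at h1 h2
  omega

lemma kerNeg {N : ℕ} (X : Matrix (Fin N) (Fin N) ℂ) :
    LinearMap.ker (-X).mulVecLin = LinearMap.ker X.mulVecLin := by
  ext v
  simp [Matrix.mulVecLin_apply, Matrix.neg_mulVec, neg_eq_zero]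

lemma eigenspace_eq_ker {N : ℕ} (F : Matrix (Fin N) (Fin N) ℂ) (t : ℂ) :
    Module.End.eigenspace F.mulVecLin t = LinearMap.ker (F - t • 1).mulVecLin := by
  ext v
  rw [Module.End.mem_eigenspace_iff, LinearMap.mem_ker, Matrix.mulVecLin_apply,
    Matrix.mulVecLin_apply, Matrix.sub_mulVec, Matrix.smul_mulVec, Matrix.one_mulVec,
    sub_eq_zero]

/-- Lemma A: skew matrix squaring to `t^2 • 1` has both eigenspaces of dim `N/2`. -/
lemma lemA {N : ℕ} (F : Matrix (Fin N) (Fin N) ℂ) (t : ℂ) (ht : t ≠ 0)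
    (hFt : Fᵀ = -F) (hF2 : F * F = (t ^ 2) • 1) :
    Even N ∧
      Module.finrank ℂ (Module.End.eigenspace F.mulVecLin t) = N / 2 ∧
      Module.finrank ℂ (Module.End.eigenspace F.mulVecLin (-t)) = N / 2 := by
  set Ep := Module.End.eigenspace F.mulVecLin t with hEp
  set Em := Module.End.eigenspace F.mulVecLin (-t) with hEm
  -- equal dimensions via transpose
  have hdim : Module.finrank ℂ Em = Module.finrank ℂ Ep := by
    rw [hEp, hEm, eigenspace_eq_ker, eigenspace_eq_ker]
    have h1 : (F - (-t) • 1) = -((F - t • 1)ᵀ) := by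
      rw [Matrix.transpose_sub, hFt, Matrix.transpose_smul, Matrix.transpose_one]
      module
    rw [h1, kerNeg, kerT]
  -- sup is top
  have hsup : Ep ⊔ Em = ⊤ := by
    rw [eq_top_iff]
    intro v _
    have h2t : (2 * t) ≠ 0 := by simp [ht]
    refine Submodule.mem_sup.2 ⟨(2*t)⁻¹ • (t • v + F *ᵥ v), ?_, (2*t)⁻¹ • (t • v - F *ᵥ v), ?_, ?_⟩
    · rw [hEp, Module.End.mem_eigenspace_iff]
      have hFF : F *ᵥ (F *ᵥ v) = t ^ 2 • v := by
        rw [Matrix.mulVec_mulVec, hF2, Matrix.smul_mulVec, Matrix.one_mulVec]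
      simp only [Matrix.mulVecLin_apply, Matrix.mulVec_smul, Matrix.mulVec_add, hFF]
      match_scalars <;> field_simp <;> try ring
    · rw [hEm, Module.End.mem_eigenspace_iff]
      have hFF : F *ᵥ (F *ᵥ v) = t ^ 2 • v := by
        rw [Matrix.mulVec_mulVec, hF2, Matrix.smul_mulVec, Matrix.one_mulVec]
      simp only [Matrix.mulVecLin_apply, Matrix.mulVec_smul, Matrix.mulVec_sub, hFF]
      match_scalars <;> field_simp <;> try ring
    · match_scalars <;> field_simp <;> try ring
  -- inf is bot
  have hinf : Ep ⊓ Em = ⊥ := by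
    rw [eq_bot_iff]
    intro v hv
    rw [Submodule.mem_inf] at hv
    obtain ⟨h1, h2⟩ := hv
    rw [hEp, Module.End.mem_eigenspace_iff] at h1
    rw [hEm, Module.End.mem_eigenspace_iff] at h2
    have heq : t • v = -t • v := h1.symm.trans h2
    have hv : v = 0 := by
      have h2t : (2 * t) ≠ 0 := by simp [ht]
      have h3 : (2 * t) • v = 0 := by
        rw [two_mul, add_smul]
        linear_combination (norm := module) heq
      rcases smul_eq_zero.1 h3 with h | h
      · exact absurd h h2t
      · exact h
    simp [hv]
  have hfr := Submodule.finrank_sup_add_finrank_inf_eq Ep Em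
  rw [hsup, hinf, finrank_top, Module.finrank_pi, finrank_bot] at hfr
  simp only [Fintype.card_fin, add_zero] at hfr
  constructor
  · exact ⟨Module.finrank ℂ Ep, by omega⟩
  constructor
  · omega
  · omega

section Corr

variable {N : ℕ}

/-- Correspondence lemma: the eigenspace of `i·Ω` at `lam` has the same dimension as
the eigenspace of `i·A` at `mu`, when `2·lam·mu = n2 - m2 - lam²`. -/
lemma lemCorr (Ac Bc Dc : Matrix (Fin N) (Fin N) ℂ) (m2 n2 lam mu : ℂ)
    (hn2 : n2 ≠ 0) (hlam : lam ≠ 0)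
    (hrel : 2 * lam * mu = n2 - m2 - lam ^ 2)
    (hA2 : Ac * Ac = (-m2) • 1) (hB1 : Bc * Bcᵀ = n2 • 1) (hB2 : Bcᵀ * Bc = n2 • 1)
    (hDB : Dc * Bcᵀ = -(Bcᵀ * Ac)) :
    Module.finrank ℂ
        (Module.End.eigenspace
          (Complex.I • Matrix.fromBlocks (-Ac) Bc (-Bcᵀ) Dc).mulVecLin lam)
      = Module.finrank ℂ (Module.End.eigenspace (Complex.I • Ac).mulVecLin mu) := by
  classical
  set Q : Matrix (Fin N) (Fin N) ℂ := (-(Complex.I * lam)) • 1 + Ac with hQ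
  set Y : Matrix (Fin N) (Fin N) ℂ := n2⁻¹ • (Bcᵀ * Q) with hY
  set R : Matrix (Fin N) (Fin N) ℂ := (Complex.I * mu) • 1 + Ac with hR
  -- matrix identities
  have hBQ : Bcᵀ * Q = (-(Complex.I * lam)) • Bcᵀ + Bcᵀ * Ac := by
    rw [hQ, Matrix.mul_add, Matrix.mul_smul, Matrix.mul_one]
  have hAQ : Ac * Q = (-(Complex.I * lam)) • Ac + (-m2) • 1 := by
    rw [hQ, Matrix.mul_add, Matrix.mul_smul, Matrix.mul_one, hA2]
  have hBY : Bc * Y = Q := by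
    rw [hY, Matrix.mul_smul, ← Matrix.mul_assoc, hB1, Matrix.smul_mul, Matrix.one_mul,
      smul_smul, inv_mul_cancel₀ hn2, one_smul]
  have hDY : Dc * Y = n2⁻¹ • (-((-(Complex.I * lam)) • (Bcᵀ * Ac) + (-m2) • Bcᵀ)) := by
    rw [hY, Matrix.mul_smul, ← Matrix.mul_assoc, hDB, Matrix.neg_mul, Matrix.mul_assoc,
      hAQ, Matrix.mul_add, Matrix.mul_smul, Matrix.mul_smul, Matrix.mul_one]
  have hYexp : Y = n2⁻¹ • ((-(Complex.I * lam)) • Bcᵀ + Bcᵀ * Ac) := by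
    rw [hY, hBQ]
  -- the central identity (M2)
  have hM2 : n2 • (Complex.I • (-Bcᵀ + Dc * Y) - lam • Y)
      = (-(2 * lam)) • (Bcᵀ * R) := by
    rw [hDY, hYexp, hR, Matrix.mul_add, Matrix.mul_smul, Matrix.mul_one]
    match_scalars
    · field_simp
      linear_combination hrel
    · field_simp
      linear_combination Complex.I_sq
  -- eq1 holds for any x when the second component is `Y *ᵥ x`
  have he1 : ∀ x : Fin N → ℂ,
      Complex.I • ((-Ac) *ᵥ x + Bc *ᵥ (Y *ᵥ x)) = lam • x := by
    intro x
    rw [Matrix.mulVec_mulVec, hBY]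
    rw [show (-Ac) *ᵥ x + Q *ᵥ x = ((-Ac) + Q) *ᵥ x from (Matrix.add_mulVec _ _ _).symm]
    rw [show (-Ac) + Q = (-(Complex.I * lam)) • 1 from by rw [hQ]; abel]
    rw [Matrix.smul_mulVec, Matrix.one_mulVec, smul_smul]
    rw [show Complex.I * -(Complex.I * lam) = lam from by
      rw [mul_neg, ← mul_assoc, Complex.I_mul_I, neg_mul, one_mul, neg_neg]]
  -- membership in the A-eigenspace is equivalent to `R *ᵥ x = 0`
  have hmemA : ∀ x : Fin N → ℂ,
      x ∈ Module.End.eigenspace (Complex.I • Ac).mulVecLin mu ↔ R *ᵥ x = 0 := by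
    intro x
    rw [Module.End.mem_eigenspace_iff, Matrix.mulVecLin_apply, Matrix.smul_mulVec,
      hR, Matrix.add_mulVec, Matrix.smul_mulVec, Matrix.one_mulVec]
    constructor
    · intro h
      have h2 : Ac *ᵥ x = (-Complex.I) • (mu • x) := by
        rw [← h, smul_smul, neg_mul, Complex.I_mul_I, neg_neg, one_smul]
      rw [h2]
      match_scalars
      ring
    · intro h
      have h2 : Ac *ᵥ x = -((Complex.I * mu) • x) := by
        rw [← neg_eq_of_add_eq_zero_right h]
      rw [h2, smul_neg, smul_smul]
      match_scalars
      linear_combination -mu * Complex.I_sq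
  -- eq2 holds iff `R *ᵥ x = 0` (given second component `Y *ᵥ x`)
  have hGx : ∀ x : Fin N → ℂ,
      n2 • (Complex.I • ((-Bcᵀ) *ᵥ x + Dc *ᵥ (Y *ᵥ x)) - lam • (Y *ᵥ x))
        = (-(2 * lam)) • (Bcᵀ *ᵥ (R *ᵥ x)) := by
    intro x
    have := congrArg (fun M => M *ᵥ x) hM2
    simp only [Matrix.smul_mulVec, Matrix.sub_mulVec, Matrix.add_mulVec,
      ← Matrix.mulVec_mulVec] at this ⊢
    exact this
  have hG : ∀ x : Fin N → ℂ, R *ᵥ x = 0 →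
      Complex.I • ((-Bcᵀ) *ᵥ x + Dc *ᵥ (Y *ᵥ x)) = lam • (Y *ᵥ x) := by
    intro x hx
    have h0 := hGx x
    rw [hx, Matrix.mulVec_zero, smul_zero] at h0
    have := smul_eq_zero.1 h0
    rcases this with h | h
    · exact absurd h hn2
    · rw [sub_eq_zero] at h; exact h
  have hG' : ∀ x : Fin N → ℂ,
      Complex.I • ((-Bcᵀ) *ᵥ x + Dc *ᵥ (Y *ᵥ x)) = lam • (Y *ᵥ x) → R *ᵥ x = 0 := by
    intro x hx
    have h0 := hGx x
    rw [hx, sub_self, smul_zero] at h0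
    have h2lam : (-(2 * lam)) ≠ 0 := by simp [hlam]
    have h1 : Bcᵀ *ᵥ (R *ᵥ x) = 0 := by
      rcases smul_eq_zero.1 h0.symm with h | h
      · exact absurd h h2lam
      · exact h
    have h2 : n2 • (R *ᵥ x) = 0 := by
      have hcalc : n2 • (R *ᵥ x) = Bc *ᵥ (Bcᵀ *ᵥ (R *ᵥ x)) := by
        rw [Matrix.mulVec_mulVec, hB1, Matrix.smul_mulVec, Matrix.one_mulVec]
      rw [hcalc, h1, Matrix.mulVec_zero]
    rcases smul_eq_zero.1 h2 with h | h
    · exact absurd h hn2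
    · exact h
  -- the linear map x ↦ (x, Y x)
  let Φ : (Fin N → ℂ) →ₗ[ℂ] ((Fin N ⊕ Fin N) → ℂ) :=
    { toFun := fun x => Sum.elim x (Y *ᵥ x)
      map_add' := fun x x' => by
        funext i; cases i <;> simp [Matrix.mulVec_add]
      map_smul' := fun c x => by
        funext i; cases i <;> simp [Matrix.mulVec_smul] }
  have hinj : Function.Injective Φ := by
    intro x x' h
    funext i
    exact congrFun h (Sum.inl i)
  have key : Module.End.eigenspace
        (Complex.I • Matrix.fromBlocks (-Ac) Bc (-Bcᵀ) Dc).mulVecLin lam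
      = Submodule.map Φ (Module.End.eigenspace (Complex.I • Ac).mulVecLin mu) := by
    ext v
    rw [Module.End.mem_eigenspace_iff, Submodule.mem_map]
    constructor
    · intro hv
      set x : Fin N → ℂ := fun i => v (Sum.inl i) with hx
      set y : Fin N → ℂ := fun i => v (Sum.inr i) with hyy
      have hvx : v = Sum.elim x y := by funext i; cases i <;> rfl
      rw [Matrix.mulVecLin_apply, Matrix.smul_mulVec, hvx,
        Matrix.fromBlocks_mulVec] at hv
      have e1 : Complex.I • ((-Ac) *ᵥ x + Bc *ᵥ y) = lam • x := by
        funext i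
        have := congrFun hv (Sum.inl i)
        simpa [hvx] using this
      have e2 : Complex.I • ((-Bcᵀ) *ᵥ x + Dc *ᵥ y) = lam • y := by
        funext i
        have := congrFun hv (Sum.inr i)
        simpa [hvx] using this
      have h1 : (-Ac) *ᵥ x + Bc *ᵥ y = (-(Complex.I * lam)) • x := by
        have h := congrArg (fun w => (-Complex.I) • w) e1
        simpa [smul_smul, neg_mul, Complex.I_mul_I, neg_neg, one_smul, neg_smul]
          using h
      have h2 : Bc *ᵥ y = Q *ᵥ x := by
        rw [hQ, Matrix.add_mulVec, Matrix.smul_mulVec, Matrix.one_mulVec]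
        rw [Matrix.neg_mulVec] at h1
        linear_combination (norm := module) h1
      have h3 : n2 • y = (Bcᵀ * Q) *ᵥ x := by
        rw [← Matrix.mulVec_mulVec, ← h2, Matrix.mulVec_mulVec, hB2,
          Matrix.smul_mulVec, Matrix.one_mulVec]
      have hyx : y = Y *ᵥ x := by
        rw [hY, Matrix.smul_mulVec, ← h3, smul_smul, inv_mul_cancel₀ hn2, one_smul]
      rw [hyx] at e2
      have hRx : R *ᵥ x = 0 := hG' x e2
      refine ⟨x, (hmemA x).2 hRx, ?_⟩
      show Sum.elim x (Y *ᵥ x) = v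
      rw [hvx, hyx]
    · rintro ⟨x, hxmem, rfl⟩
      have hRx : R *ᵥ x = 0 := (hmemA x).1 hxmem
      show (Complex.I • Matrix.fromBlocks (-Ac) Bc (-Bcᵀ) Dc).mulVecLin
          (Sum.elim x (Y *ᵥ x)) = lam • Sum.elim x (Y *ᵥ x)
      rw [Matrix.mulVecLin_apply, Matrix.smul_mulVec, Matrix.fromBlocks_mulVec]
      funext i
      cases i with
      | inl i =>
        have := congrFun (he1 x) i
        simpa using this
      | inr i =>
        have := congrFun (hG x hRx) i
        simpa using this
  rw [key]
  exact (Submodule.equivMapOfInjective Φ hinj _).finrank_eq.symm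

end Corr

/-- For `z = (μ,ν)` with `μ ≠ 0`, `ν ≠ 0`, `‖μ‖ ≠ ‖ν‖`, each of the four eigenvalues
`±(‖μ‖ ± ‖ν‖)` of `i·Ω(z)` has eigenspace of dimension `N/2`; in particular `N` is even. -/
theorem statement10 {r s N : ℕ} (hs : 0 < s)
    (μ : Fin r → ℝ) (ν : Fin s → ℝ) (hμ : μ ≠ 0) (hν : ν ≠ 0)
    (hne : (∑ i, μ i ^ 2) ≠ (∑ j, ν j ^ 2))
    (A B D : Matrix (Fin N) (Fin N) ℝ)
    (hA : Aᵀ = -A) (hD : Dᵀ = -D)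
    (hA2 : A * A = (-(∑ i, μ i ^ 2)) • (1 : Matrix (Fin N) (Fin N) ℝ))
    (hD2 : D * D = (-(∑ i, μ i ^ 2)) • (1 : Matrix (Fin N) (Fin N) ℝ))
    (hB1 : B * Bᵀ = (∑ j, ν j ^ 2) • (1 : Matrix (Fin N) (Fin N) ℝ))
    (hB2 : Bᵀ * B = (∑ j, ν j ^ 2) • (1 : Matrix (Fin N) (Fin N) ℝ))
    (hAB : A * B + B * D = 0)
    (hBA : Bᵀ * A + D * Bᵀ = 0) :
    Even N ∧
    ∀ t : ℂ,
      (t = ((Real.sqrt (∑ i, μ i ^ 2) + Real.sqrt (∑ j, ν j ^ 2) : ℝ) : ℂ) ∨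
       t = (-(Real.sqrt (∑ i, μ i ^ 2) + Real.sqrt (∑ j, ν j ^ 2) : ℝ) : ℂ) ∨
       t = ((Real.sqrt (∑ i, μ i ^ 2) - Real.sqrt (∑ j, ν j ^ 2) : ℝ) : ℂ) ∨
       t = (-(Real.sqrt (∑ i, μ i ^ 2) - Real.sqrt (∑ j, ν j ^ 2) : ℝ) : ℂ)) →
      Module.finrank ℂ
        ↥(Module.End.eigenspace
            (Matrix.mulVecLin (Complex.I •
              (Matrix.fromBlocks (-A) B (-Bᵀ) D).map (Complex.ofReal))) t)
        = N / 2 := by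
  classical
  set m2 : ℝ := ∑ i, μ i ^ 2 with hm2def
  set n2 : ℝ := ∑ j, ν j ^ 2 with hn2def
  have hm2pos : 0 < m2 := by
    obtain ⟨i, hi⟩ := Function.ne_iff.1 hμ
    refine Finset.sum_pos' (fun i _ => sq_nonneg _)
      ⟨i, Finset.mem_univ i, (Even.pow_pos_iff (by norm_num) (by norm_num)).2 (by simpa using hi)⟩
  have hn2pos : 0 < n2 := by
    obtain ⟨j, hj⟩ := Function.ne_iff.1 hν
    refine Finset.sum_pos' (fun j _ => sq_nonneg _)
      ⟨j, Finset.mem_univ j, (Even.pow_pos_iff (by norm_num) (by norm_num)).2 (by simpa using hj)⟩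
  set m : ℝ := Real.sqrt m2 with hmdef
  set n : ℝ := Real.sqrt n2 with hndef
  have hm : m ^ 2 = m2 := Real.sq_sqrt hm2pos.le
  have hn : n ^ 2 = n2 := Real.sq_sqrt hn2pos.le
  have hmpos : 0 < m := Real.sqrt_pos.2 hm2pos
  have hnpos : 0 < n := Real.sqrt_pos.2 hn2pos
  have hmn : m ≠ n := fun h => hne (by rw [← hm, ← hn, h])
  -- complexification
  have hmul : ∀ X Y : Matrix (Fin N) (Fin N) ℝ,
      (X * Y).map Complex.ofReal = X.map Complex.ofReal * Y.map Complex.ofReal := by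
    intro X Y
    ext i j
    simp [Matrix.mul_apply, Matrix.map_apply]
  have hneg : ∀ X : Matrix (Fin N) (Fin N) ℝ,
      (-X).map Complex.ofReal = -(X.map Complex.ofReal) := by
    intro X; ext i j; simp [Matrix.map_apply]
  have hsm1 : ∀ c : ℝ, ((c • (1 : Matrix (Fin N) (Fin N) ℝ)).map Complex.ofReal)
      = ((c : ℂ)) • (1 : Matrix (Fin N) (Fin N) ℂ) := by
    intro c; ext i j
    by_cases h : i = j <;> simp [Matrix.map_apply, Matrix.one_apply, h]
  set Ac := A.map Complex.ofReal with hAcdef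
  set Bc := B.map Complex.ofReal with hBcdef
  set Dc := D.map Complex.ofReal with hDcdef
  have hAcT : Acᵀ = -Ac := by
    rw [hAcdef, ← Matrix.transpose_map, hA, hneg]
  have hA2c : Ac * Ac = (-(m2 : ℂ)) • 1 := by
    rw [hAcdef, ← hmul, hA2, ← Complex.ofReal_neg, hsm1]
  have hB1c : Bc * Bcᵀ = ((n2 : ℂ)) • 1 := by
    rw [hBcdef, ← Matrix.transpose_map, ← hmul, hB1, hsm1]
  have hB2c : Bcᵀ * Bc = ((n2 : ℂ)) • 1 := by
    rw [hBcdef, ← Matrix.transpose_map, ← hmul, hB2, hsm1]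
  have hDBr : D * Bᵀ = -(Bᵀ * A) := (neg_eq_of_add_eq_zero_right hBA).symm
  have hDBc : Dc * Bcᵀ = -(Bcᵀ * Ac) := by
    rw [hDcdef, hBcdef, hAcdef, ← Matrix.transpose_map, ← hmul, hDBr, hneg, hmul]
  -- the block matrix
  have hblock : (Matrix.fromBlocks (-A) B (-Bᵀ) D).map Complex.ofReal
      = Matrix.fromBlocks (-Ac) Bc (-Bcᵀ) Dc := by
    rw [Matrix.fromBlocks_map]
    rw [hneg, hneg, ← Matrix.transpose_map]
  -- eigenspace dimensions for i•Ac
  have hF2 : (Complex.I • Ac) * (Complex.I • Ac) = ((m : ℂ) ^ 2) • 1 := by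
    rw [Matrix.smul_mul, Matrix.mul_smul, smul_smul, hA2c, smul_smul]
    congr 1
    rw [Complex.I_mul_I]
    have : ((m : ℂ)) ^ 2 = ((m2 : ℝ) : ℂ) := by
      rw [← Complex.ofReal_pow, hm]
    rw [this]
    ring
  have hFt : (Complex.I • Ac)ᵀ = -(Complex.I • Ac) := by
    rw [Matrix.transpose_smul, hAcT, smul_neg]
  have hmc : ((m : ℂ)) ≠ 0 := by
    simp only [ne_eq, Complex.ofReal_eq_zero]
    exact hmpos.ne'
  obtain ⟨hEvenN, hdimP, hdimM⟩ := lemA (Complex.I • Ac) ((m : ℂ)) hmc hFt hF2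
  refine ⟨hEvenN, ?_⟩
  intro t ht
  have hn2c : ((n2 : ℝ) : ℂ) ≠ 0 := by
    simp only [ne_eq, Complex.ofReal_eq_zero]
    exact hn2pos.ne'
  rw [hblock]
  have hmC : ((m : ℂ)) ^ 2 = ((m2 : ℝ) : ℂ) := by rw [← Complex.ofReal_pow, hm]
  have hnC : ((n : ℂ)) ^ 2 = ((n2 : ℝ) : ℂ) := by rw [← Complex.ofReal_pow, hn]
  rcases ht with h | h | h | h
  · subst h
    have hlam : ((m + n : ℝ) : ℂ) ≠ 0 := Complex.ofReal_ne_zero.2 (by positivity)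
    have hrel : 2 * ((m + n : ℝ) : ℂ) * (-(m : ℂ))
        = ((n2 : ℝ) : ℂ) - ((m2 : ℝ) : ℂ) - ((m + n : ℝ) : ℂ) ^ 2 := by
      push_cast
      linear_combination hnC - hmC
    rw [lemCorr Ac Bc Dc _ _ _ (-(m : ℂ)) hn2c hlam hrel hA2c hB1c hB2c hDBc]
    exact hdimM
  · subst h
    have hlam : -((m + n : ℝ) : ℂ) ≠ 0 :=
      neg_ne_zero.2 (Complex.ofReal_ne_zero.2 (by positivity))
    have hrel : 2 * (-((m + n : ℝ) : ℂ)) * ((m : ℂ))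
        = ((n2 : ℝ) : ℂ) - ((m2 : ℝ) : ℂ) - (-((m + n : ℝ) : ℂ)) ^ 2 := by
      push_cast
      linear_combination hnC - hmC
    rw [lemCorr Ac Bc Dc _ _ _ ((m : ℂ)) hn2c hlam hrel hA2c hB1c hB2c hDBc]
    exact hdimP
  · subst h
    have hlam : ((m - n : ℝ) : ℂ) ≠ 0 :=
      Complex.ofReal_ne_zero.2 (sub_ne_zero.2 hmn)
    have hrel : 2 * ((m - n : ℝ) : ℂ) * (-(m : ℂ))
        = ((n2 : ℝ) : ℂ) - ((m2 : ℝ) : ℂ) - ((m - n : ℝ) : ℂ) ^ 2 := by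
      push_cast
      linear_combination hnC - hmC
    rw [lemCorr Ac Bc Dc _ _ _ (-(m : ℂ)) hn2c hlam hrel hA2c hB1c hB2c hDBc]
    exact hdimM
  · subst h
    have hlam : -((m - n : ℝ) : ℂ) ≠ 0 :=
      neg_ne_zero.2 (Complex.ofReal_ne_zero.2 (sub_ne_zero.2 hmn))
    have hrel : 2 * (-((m - n : ℝ) : ℂ)) * ((m : ℂ))
        = ((n2 : ℝ) : ℂ) - ((m2 : ℝ) : ℂ) - (-((m - n : ℝ) : ℂ)) ^ 2 := by
      push_cast
      linear_combination hnC - hmC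
    rw [lemCorr Ac Bc Dc _ _ _ ((m : ℂ)) hn2c hlam hrel hA2c hB1c hB2c hDBc]
    exact hdimP
end

section
/- If μ = 0 and ν ≠ 0 then i·Ω(z) has exactly the eigenvalues ‖ν‖ and -‖ν‖, each with eigenspace of dimension N. Similarly, if ν = 0 and μ ≠ 0 then i·Ω(z) has eigenvalues ±‖μ‖, each of multiplicity N. -/
/-!
Write `Ω` for the real block matrix and `M = i Ω`. In both cases the block identities give
`Ω² = -s` with `s = ∑ ν_j²` (resp. `∑ μ_i²`), hence `M² = c²` for `c = √s > 0`. An operator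
squaring to `c² ≠ 0` is the direct sum of its `c`- and `-c`-eigenspaces and has no other
eigenvalue. Since `Ω` is real, complex conjugation maps the `c`-eigenspace of `M` `ℝ`-linearly
onto its `-c`-eigenspace, so both have the same dimension, namely half of `2N`.
-/

open scoped Matrix
open Module Complex

namespace Module.End

variable {K V : Type*} [Field K] [AddCommGroup V] [Module K V] {f : End K V} {c : K}

theorem apply_apply_of_mul_self_eq (hf : f * f = c ^ 2 • 1) (v : V) : f (f v) = c ^ 2 • v := by
  simpa using LinearMap.congr_fun hf v

theorem eq_or_eq_neg_of_hasEigenvalue_of_mul_self_eq (hf : f * f = c ^ 2 • 1) {μ : K}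
    (hμ : f.HasEigenvalue μ) : μ = c ∨ μ = -c := by
  obtain ⟨v, hv⟩ := hμ.exists_hasEigenvector
  have hsq : μ ^ 2 • v = c ^ 2 • v := by
    rw [← apply_apply_of_mul_self_eq hf, hv.apply_eq_smul, map_smul, hv.apply_eq_smul,
      smul_smul, sq]
  exact sq_eq_sq_iff_eq_or_eq_neg.mp (smul_left_injective K hv.2 hsq)

theorem eigenspace_sup_eigenspace_neg_eq_top [NeZero (2 : K)] (hf : f * f = c ^ 2 • 1)
    (hc : c ≠ 0) : f.eigenspace c ⊔ f.eigenspace (-c) = ⊤ := by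
  refine eq_top_iff.mpr fun v _ => ?_
  have h2c : 2 * c ≠ 0 := mul_ne_zero two_ne_zero hc
  -- `(c v ± f v) / 2c` are eigenvectors for `±c` summing to `v`.
  have hv : v = (2 * c)⁻¹ • (c • v + f v) + (2 * c)⁻¹ • (c • v - f v) := by
    rw [← smul_add, show c • v + f v + (c • v - f v) = (2 * c) • v by module, smul_smul,
      inv_mul_cancel₀ h2c, one_smul]
  rw [hv]
  refine Submodule.add_mem_sup (Submodule.smul_mem _ _ ?_) (Submodule.smul_mem _ _ ?_)
  · rw [mem_eigenspace_iff, map_add, map_smul, apply_apply_of_mul_self_eq hf]; module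
  · rw [mem_eigenspace_iff, map_sub, map_smul, apply_apply_of_mul_self_eq hf]; module

theorem finrank_eigenspace_add_finrank_eigenspace_neg [FiniteDimensional K V] [NeZero (2 : K)]
    (hf : f * f = c ^ 2 • 1) (hc : c ≠ 0) :
    finrank K (f.eigenspace c) + finrank K (f.eigenspace (-c)) = finrank K V := by
  have hne : c ≠ -c := fun h =>
    hc ((mul_eq_zero.mp (by linear_combination h : 2 * c = 0)).resolve_left two_ne_zero)
  rw [← Submodule.finrank_sup_add_finrank_inf_eq,
    (f.eigenspaces_iSupIndep.pairwiseDisjoint hne).eq_bot, finrank_bot,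
    eigenspace_sup_eigenspace_neg_eq_top hf hc, finrank_top, add_zero]

end Module.End

namespace Matrix

section Blocks

variable {m n α : Type*} [Fintype m] [Fintype n] [DecidableEq m] [DecidableEq n] [CommRing α]

theorem fromBlocks_zero_neg_transpose_mul_self (B : Matrix m n α) {s : α}
    (hB : B * Bᵀ = s • 1) (hB' : Bᵀ * B = s • 1) :
    fromBlocks 0 B (-Bᵀ) 0 * fromBlocks 0 B (-Bᵀ) 0 = (-s) • 1 := by
  rw [fromBlocks_multiply, ← fromBlocks_one, fromBlocks_smul]
  simp [hB, hB']

theorem fromBlocks_diagonal_mul_self (A : Matrix m m α) (D : Matrix n n α) {s : α}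
    (hA : A * A = s • 1) (hD : D * D = s • 1) :
    fromBlocks A 0 0 D * fromBlocks A 0 0 D = s • 1 := by
  rw [fromBlocks_multiply, ← fromBlocks_one, fromBlocks_smul]
  simp [hA, hD]

end Blocks

variable {m : Type*} [Fintype m]

theorem star_I_smul_map_ofReal_mulVec (R : Matrix m m ℝ) (v : m → ℂ) :
    star ((I • R.map ofReal) *ᵥ v) = -((I • R.map ofReal) *ᵥ star v) := by
  funext i
  simp [mulVec, dotProduct, ← Finset.sum_neg_distrib, mul_comm]

theorem star_mem_eigenspace_I_smul_map_ofReal (R : Matrix m m ℝ) {μ : ℂ} {v : m → ℂ}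
    (hv : v ∈ End.eigenspace (I • R.map ofReal).mulVecLin μ) :
    star v ∈ End.eigenspace (I • R.map ofReal).mulVecLin (-star μ) := by
  rw [End.mem_eigenspace_iff, mulVecLin_apply] at hv ⊢
  rw [← neg_eq_iff_eq_neg.mpr (star_I_smul_map_ofReal_mulVec R v), hv, star_smul, neg_smul]

def eigenspaceStarEquiv (R : Matrix m m ℝ) (μ : ℂ) :
    End.eigenspace (I • R.map ofReal).mulVecLin μ ≃ₗ[ℝ]
      End.eigenspace (I • R.map ofReal).mulVecLin (-star μ) where
  toFun v := ⟨star v, star_mem_eigenspace_I_smul_map_ofReal R v.2⟩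
  invFun v := ⟨star v, by simpa using star_mem_eigenspace_I_smul_map_ofReal R v.2⟩
  map_add' _ _ := by ext; simp
  map_smul' _ _ := by ext; simp
  left_inv _ := by ext; simp
  right_inv _ := by ext; simp

theorem finrank_eigenspace_I_smul_map_ofReal_neg_star (R : Matrix m m ℝ) (μ : ℂ) :
    finrank ℂ (End.eigenspace (I • R.map ofReal).mulVecLin (-star μ))
      = finrank ℂ (End.eigenspace (I • R.map ofReal).mulVecLin μ) := by
  have := (eigenspaceStarEquiv R μ).finrank_eq
  rw [finrank_real_of_complex, finrank_real_of_complex] at this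
  omega

theorem finrank_eigenspace_I_smul_map_ofReal_neg (R : Matrix m m ℝ) (c : ℝ) :
    finrank ℂ (End.eigenspace (I • R.map ofReal).mulVecLin (-c))
      = finrank ℂ (End.eigenspace (I • R.map ofReal).mulVecLin c) := by
  rw [← finrank_eigenspace_I_smul_map_ofReal_neg_star R c, star_def, conj_ofReal]

variable [DecidableEq m]

theorem mulVecLin_I_smul_map_ofReal_mul_self (R : Matrix m m ℝ) {c : ℝ}
    (hR : R * R = -(c ^ 2) • 1) :
    (I • R.map ofReal).mulVecLin * (I • R.map ofReal).mulVecLin = (c : ℂ) ^ 2 • 1 := by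
  have hmap : R.map ofReal * R.map ofReal = (R * R).map ofReal :=
    (Matrix.map_mul (f := ofRealHom)).symm
  have hsq : I • R.map ofReal * I • R.map ofReal = (c : ℂ) ^ 2 • (1 : Matrix m m ℂ) := by
    rw [smul_mul_smul_comm, hmap, hR, I_mul_I]
    ext i j
    by_cases h : i = j <;> simp [h]
  rw [End.mul_eq_comp, ← mulVecLin_mul, hsq]
  ext
  simp

theorem two_mul_finrank_eigenspace_I_smul_map_ofReal (R : Matrix m m ℝ) {c : ℝ} (hc : c ≠ 0)
    (hR : R * R = -(c ^ 2) • 1) :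
    2 * finrank ℂ (End.eigenspace (I • R.map ofReal).mulVecLin c) = Fintype.card m := by
  have hsum := End.finrank_eigenspace_add_finrank_eigenspace_neg
    (mulVecLin_I_smul_map_ofReal_mul_self R hR) (ofReal_ne_zero.mpr hc)
  rw [finrank_eigenspace_I_smul_map_ofReal_neg, finrank_fintype_fun_eq_card] at hsum
  omega

theorem two_mul_finrank_eigenspace_neg_I_smul_map_ofReal (R : Matrix m m ℝ) {c : ℝ}
    (hc : c ≠ 0) (hR : R * R = -(c ^ 2) • 1) :
    2 * finrank ℂ (End.eigenspace (I • R.map ofReal).mulVecLin (-c)) = Fintype.card m := by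
  rw [finrank_eigenspace_I_smul_map_ofReal_neg,
    two_mul_finrank_eigenspace_I_smul_map_ofReal R hc hR]

theorem spectrum_I_smul_map_ofReal [Nonempty m] (R : Matrix m m ℝ) {c : ℝ} (hc : c ≠ 0)
    (hR : R * R = -(c ^ 2) • 1) :
    spectrum ℂ (I • R.map ofReal) = {(c : ℂ), -(c : ℂ)} := by
  have hasEigenvalue_of_finrank : ∀ μ : ℂ,
      2 * finrank ℂ (End.eigenspace (I • R.map ofReal).mulVecLin μ) = Fintype.card m →
      End.HasEigenvalue (I • R.map ofReal).mulVecLin μ := fun μ hμ => by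
    rw [End.hasEigenvalue_iff, ne_eq, ← Submodule.finrank_eq_zero]
    have := Fintype.card_pos (α := m)
    omega
  ext μ
  rw [← spectrum_toLin', toLin'_apply', ← End.hasEigenvalue_iff_mem_spectrum]
  refine ⟨End.eq_or_eq_neg_of_hasEigenvalue_of_mul_self_eq
    (mulVecLin_I_smul_map_ofReal_mul_self R hR), ?_⟩
  rintro (rfl | rfl)
  · exact hasEigenvalue_of_finrank _ (two_mul_finrank_eigenspace_I_smul_map_ofReal R hc hR)
  · exact hasEigenvalue_of_finrank _ (two_mul_finrank_eigenspace_neg_I_smul_map_ofReal R hc hR)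

theorem spectrum_and_finrank_eigenspace_I_smul_map_ofReal {N : ℕ} (hN : 0 < N)
    (R : Matrix (Fin N ⊕ Fin N) (Fin N ⊕ Fin N) ℝ) {s : ℝ} (hs : 0 < s)
    (hR : R * R = (-s) • 1) :
    spectrum ℂ (I • R.map ofReal) = {((√s : ℝ) : ℂ), -((√s : ℝ) : ℂ)} ∧
      finrank ℂ (End.eigenspace (I • R.map ofReal).mulVecLin ((√s : ℝ) : ℂ)) = N ∧
      finrank ℂ (End.eigenspace (I • R.map ofReal).mulVecLin (-((√s : ℝ) : ℂ))) = N := by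
  have : Nonempty (Fin N ⊕ Fin N) := ⟨.inl ⟨0, hN⟩⟩
  have hc : √s ≠ 0 := (Real.sqrt_pos.mpr hs).ne'
  have hR' : R * R = -(√s ^ 2) • 1 := by rw [Real.sq_sqrt hs.le, hR]
  have hpos := two_mul_finrank_eigenspace_I_smul_map_ofReal R hc hR'
  have hneg := two_mul_finrank_eigenspace_neg_I_smul_map_ofReal R hc hR'
  simp only [Fintype.card_sum, Fintype.card_fin] at hpos hneg
  exact ⟨spectrum_I_smul_map_ofReal R hc hR', by omega, by omega⟩

end Matrix

theorem sum_sq_pos_of_ne_zero {ι : Type*} [Fintype ι] {ν : ι → ℝ} (hν : ν ≠ 0) :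
    0 < ∑ j, ν j ^ 2 := by
  obtain ⟨j, hj⟩ := Function.ne_iff.mp hν
  exact Finset.sum_pos' (fun i _ => sq_nonneg _)
    ⟨j, Finset.mem_univ j, pow_two_pos_of_ne_zero hj⟩

/-- If `μ = 0` and `ν ≠ 0` then `i·Ω(z)` (with `Ω(z) = [[0, B(ν)],[-B(ν)ᵀ, 0]]`) has
exactly the eigenvalues `±‖ν‖`, each with eigenspace of dimension `N`.  Similarly, if
`ν = 0` and `μ ≠ 0` then `i·Ω(z) = i·diag(-A(μ), D(μ))` has eigenvalues `±‖μ‖`, each of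
multiplicity `N`. -/
theorem statement11 :
    (∀ (s N : ℕ), 0 < s → 0 < N → ∀ ν : Fin s → ℝ, ν ≠ 0 →
      ∀ B : Matrix (Fin N) (Fin N) ℝ,
        B * Bᵀ = (∑ j, ν j ^ 2) • (1 : Matrix (Fin N) (Fin N) ℝ) →
        Bᵀ * B = (∑ j, ν j ^ 2) • (1 : Matrix (Fin N) (Fin N) ℝ) →
        spectrum ℂ (Complex.I •
            (Matrix.fromBlocks (0 : Matrix (Fin N) (Fin N) ℝ) B (-Bᵀ) 0).map
              (Complex.ofReal))
          = {((Real.sqrt (∑ j, ν j ^ 2) : ℝ) : ℂ),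
             (-(Real.sqrt (∑ j, ν j ^ 2) : ℝ) : ℂ)} ∧
        Module.finrank ℂ
          ↥(Module.End.eigenspace
              (Matrix.mulVecLin (Complex.I •
                (Matrix.fromBlocks (0 : Matrix (Fin N) (Fin N) ℝ) B (-Bᵀ) 0).map
                  (Complex.ofReal)))
              ((Real.sqrt (∑ j, ν j ^ 2) : ℝ) : ℂ)) = N ∧
        Module.finrank ℂ
          ↥(Module.End.eigenspace
              (Matrix.mulVecLin (Complex.I •
                (Matrix.fromBlocks (0 : Matrix (Fin N) (Fin N) ℝ) B (-Bᵀ) 0).map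
                  (Complex.ofReal)))
              (-(Real.sqrt (∑ j, ν j ^ 2) : ℝ) : ℂ)) = N) ∧
    (∀ (r N : ℕ), 0 < r → 0 < N → ∀ μ : Fin r → ℝ, μ ≠ 0 →
      ∀ A D : Matrix (Fin N) (Fin N) ℝ,
        Aᵀ = -A → Dᵀ = -D →
        A * A = (-(∑ i, μ i ^ 2)) • (1 : Matrix (Fin N) (Fin N) ℝ) →
        D * D = (-(∑ i, μ i ^ 2)) • (1 : Matrix (Fin N) (Fin N) ℝ) →
        spectrum ℂ (Complex.I •
            (Matrix.fromBlocks (-A) (0 : Matrix (Fin N) (Fin N) ℝ) 0 D).map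
              (Complex.ofReal))
          = {((Real.sqrt (∑ i, μ i ^ 2) : ℝ) : ℂ),
             (-(Real.sqrt (∑ i, μ i ^ 2) : ℝ) : ℂ)} ∧
        Module.finrank ℂ
          ↥(Module.End.eigenspace
              (Matrix.mulVecLin (Complex.I •
                (Matrix.fromBlocks (-A) (0 : Matrix (Fin N) (Fin N) ℝ) 0 D).map
                  (Complex.ofReal)))
              ((Real.sqrt (∑ i, μ i ^ 2) : ℝ) : ℂ)) = N ∧
        Module.finrank ℂ
          ↥(Module.End.eigenspace
              (Matrix.mulVecLin (Complex.I •
                (Matrix.fromBlocks (-A) (0 : Matrix (Fin N) (Fin N) ℝ) 0 D).map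
                  (Complex.ofReal)))
              (-(Real.sqrt (∑ i, μ i ^ 2) : ℝ) : ℂ)) = N) := by
  refine ⟨fun s N _ hN ν hν B hB hB' => ?_, fun r N _ hN μ hμ A D _ _ hA hD => ?_⟩
  · exact Matrix.spectrum_and_finrank_eigenspace_I_smul_map_ofReal hN _
      (sum_sq_pos_of_ne_zero hν) (Matrix.fromBlocks_zero_neg_transpose_mul_self B hB hB')
  · have hA' : -A * -A = (-(∑ i, μ i ^ 2)) • 1 := by rw [neg_mul_neg, hA]
    exact Matrix.spectrum_and_finrank_eigenspace_I_smul_map_ofReal hN _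
      (sum_sq_pos_of_ne_zero hμ) (Matrix.fromBlocks_diagonal_mul_self (-A) D hA' hD)
end

section
/- The lattice Γ_{r,s}(V) := { Σ m_i X_i + ½ Σ k_j Z_j : m_i, k_j ∈ ℤ } is a subgroup of the pseudo H-type group 𝔾_{r,s}(V) (with group law g*h = g + h + ½[g,h]) whenever {X_i, Z_j} is an integral basis, i.e., all structure constants c_{ij}^k ∈ {0, ±1}. -/
open scoped BigOperators

/-- The group law `g * h = g + h + ½[g,h]` of a 2-step nilpotent Lie group identified with
its Lie algebra, where the bracket is given by structure constants `c`. -/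
noncomputable def nilMul {m d : ℕ} (c : Fin m → Fin m → Fin d → ℝ)
    (g h : (Fin m → ℝ) × (Fin d → ℝ)) : (Fin m → ℝ) × (Fin d → ℝ) :=
  (g.1 + h.1, g.2 + h.2 + fun k => (1 / 2 : ℝ) * ∑ i, ∑ j, c i j k * g.1 i * h.1 j)

/-- Membership in the standard integral lattice
`Γ = { Σ mᵢ Xᵢ + ½ Σ kⱼ Zⱼ : mᵢ, kⱼ ∈ ℤ }`. -/
def inLattice {m d : ℕ} (g : (Fin m → ℝ) × (Fin d → ℝ)) : Prop :=
  (∀ i, ∃ a : ℤ, g.1 i = a) ∧ (∀ k, ∃ a : ℤ, g.2 k = a / 2)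

section Bracket

variable {m d : ℕ} (c : Fin m → Fin m → Fin d → ℝ)

theorem sum_structConst_mul_self_eq_zero (hskew : ∀ i j k, c i j k = - c j i k)
    (x : Fin m → ℝ) (k : Fin d) : ∑ i, ∑ j, c i j k * x i * x j = 0 := by
  have hanti : ∑ i, ∑ j, c i j k * x i * x j = -∑ i, ∑ j, c i j k * x i * x j := by
    calc ∑ i, ∑ j, c i j k * x i * x j = ∑ i, ∑ j, -(c j i k * x j * x i) := by
          refine Finset.sum_congr rfl fun i _ => Finset.sum_congr rfl fun j _ => ?_
          rw [hskew i j k]; ring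
      _ = -∑ i, ∑ j, c i j k * x i * x j := by
          rw [Finset.sum_comm]; simp only [Finset.sum_neg_distrib]
  linarith

theorem nilMul_self_neg (hskew : ∀ i j k, c i j k = - c j i k) (g : (Fin m → ℝ) × (Fin d → ℝ)) :
    nilMul c g (-g) = 0 := by
  ext k
  · simp [nilMul]
  · simp [nilMul, sum_structConst_mul_self_eq_zero c hskew g.1 k]

theorem nilMul_neg_self (hskew : ∀ i j k, c i j k = - c j i k) (g : (Fin m → ℝ) × (Fin d → ℝ)) :
    nilMul c (-g) g = 0 := by
  ext k
  · simp [nilMul]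
  · simp [nilMul, sum_structConst_mul_self_eq_zero c hskew g.1 k]

end Bracket

section Lattice

variable {m d : ℕ}

theorem inLattice_zero : inLattice ((0 : Fin m → ℝ), (0 : Fin d → ℝ)) :=
  ⟨fun _ => ⟨0, by simp⟩, fun _ => ⟨0, by simp⟩⟩

theorem inLattice_neg {g : (Fin m → ℝ) × (Fin d → ℝ)} (hg : inLattice g) : inLattice (-g) := by
  obtain ⟨hX, hZ⟩ := hg
  refine ⟨fun i => ?_, fun k => ?_⟩
  · obtain ⟨a, ha⟩ := hX i
    exact ⟨-a, by simp [ha]⟩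
  · obtain ⟨a, ha⟩ := hZ k
    exact ⟨-a, by simp [ha, neg_div]⟩

theorem inLattice_nilMul {c : Fin m → Fin m → Fin d → ℝ} (hc : ∀ i j k, ∃ n : ℤ, c i j k = n)
    {g h : (Fin m → ℝ) × (Fin d → ℝ)} (hg : inLattice g) (hh : inLattice h) :
    inLattice (nilMul c g h) := by
  choose n hn using hc
  choose a ha using hg.1
  choose b hb using hh.1
  choose p hp using hg.2
  choose q hq using hh.2
  refine ⟨fun i => ⟨a i + b i, by simp [nilMul, ha, hb]⟩, fun k => ?_⟩
  -- the factor ½ of the bracket is absorbed by the half-integer lattice in the centre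
  refine ⟨p k + q k + ∑ i, ∑ j, n i j k * a i * b j, ?_⟩
  simp only [nilMul, Pi.add_apply, hp, hq, hn, ha, hb]
  push_cast
  ring

end Lattice

/-- The lattice `Γ_{r,s}(V) = { Σ mᵢ Xᵢ + ½ Σ kⱼ Zⱼ : mᵢ, kⱼ ∈ ℤ }` is a subgroup of the
pseudo H-type group `𝔾_{r,s}(V)` (group law `g*h = g + h + ½[g,h]`) whenever `{Xᵢ, Zⱼ}`
is an integral basis, i.e. all structure constants `c_{ij}^k ∈ {0, ±1}`: it contains the
identity and is closed under the product and under inverses. -/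
theorem statement19 {m d : ℕ}
    (c : Fin m → Fin m → Fin d → ℝ)
    (hint : ∀ i j k, c i j k = 0 ∨ c i j k = 1 ∨ c i j k = -1)
    (hskew : ∀ i j k, c i j k = - c j i k) :
    inLattice ((0 : Fin m → ℝ), (0 : Fin d → ℝ)) ∧
    (∀ g h : (Fin m → ℝ) × (Fin d → ℝ),
      inLattice g → inLattice h → inLattice (nilMul c g h)) ∧
    (∀ g : (Fin m → ℝ) × (Fin d → ℝ), inLattice g →
      inLattice (-g) ∧
      nilMul c g (-g) = ((0 : Fin m → ℝ), (0 : Fin d → ℝ)) ∧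
      nilMul c (-g) g = ((0 : Fin m → ℝ), (0 : Fin d → ℝ))) := by
  have hcZ : ∀ i j k, ∃ n : ℤ, c i j k = n := fun i j k => by
    rcases hint i j k with h | h | h
    exacts [⟨0, by simp [h]⟩, ⟨1, by simp [h]⟩, ⟨-1, by simp [h]⟩]
  exact ⟨inLattice_zero, fun _ _ => inLattice_nilMul hcZ,
    fun g hg => ⟨inLattice_neg hg, nilMul_self_neg c hskew g, nilMul_neg_self c hskew g⟩⟩
end
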